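/- arXiv:2407.07252 — 9 statements merged into one kernel-verified Lean document; each statement's English description precedes it below -/
import Mathlib

section
/- For any set X, any integer p ≥ 1, any functions f_1,…,f_p : X → ℝ and any (x_0,x_1,…,x_p) ∈ X^{p+1}, one has δ_{p-1} Alt_p(f_1⊗⋯⊗f_p)(x_0,x_1,…,x_p) = (1/p!) · det[(f_i(x_j) − f_i(x_0))_{i,j=1}^p], the determinant of the p×p matrix with (i,j)-entry f_i(x_j) − f_i(x_0). -/
noncomputable section

/-- The antisymmetrizer: `Alt_p(F)(x_1,…,x_p) = (1/p!) Σ_{σ ∈ S_p} sgn(σ) F(x_{σ(1)},…,x_{σ(p)})`. -/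
def altP {X : Type*} {p : ℕ} (F : (Fin p → X) → ℝ) : (Fin p → X) → ℝ :=
  fun x => (Nat.factorial p : ℝ)⁻¹ *
    ∑ σ : Equiv.Perm (Fin p), ((Equiv.Perm.sign σ : ℤ) : ℝ) * F (x ∘ σ)

/-- The Kolmogorov–Alexander–Spanier coboundary operator:
`δF(x_0, …, x_p) = Σ_{i=0}^p (-1)^i F(x_0, …, x̂_i, …, x_p)`. -/
def kasDelta {X : Type*} {p : ℕ} (F : (Fin p → X) → ℝ) : (Fin (p + 1) → X) → ℝ :=
  fun x => ∑ i : Fin (p + 1), (-1 : ℝ) ^ (i : ℕ) * F (x ∘ i.succAbove)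

/-- The tensor product of functions: `(f_1 ⊗ … ⊗ f_p)(x_1,…,x_p) = f_1(x_1)⋯f_p(x_p)`. -/
def tens {X : Type*} {p : ℕ} (f : Fin p → X → ℝ) : (Fin p → X) → ℝ :=
  fun x => ∏ i, f i (x i)

/-- `δ_{p-1} Alt_p(f_1⊗⋯⊗f_p)(x_0,x_1,…,x_p) = (1/p!) det[(f_i(x_j) − f_i(x_0))_{i,j=1}^p]`. -/
theorem kasDelta_altP_tens_eq_det (X : Type*) (p : ℕ) (hp : 1 ≤ p)
    (f : Fin p → X → ℝ) (x : Fin (p + 1) → X) :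
    kasDelta (altP (tens f)) x =
      (Nat.factorial p : ℝ)⁻¹ *
        Matrix.det (Matrix.of fun i j : Fin p => f i (x j.succ) - f i (x 0)) := by
  have halt : ∀ y : Fin p → X,
      altP (tens f) y = (p.factorial : ℝ)⁻¹ *
        Matrix.det (Matrix.of fun i j : Fin p => f j (y i)) := by
    intro y
    rw [Matrix.det_apply']
    simp only [altP, tens, Matrix.of_apply, Function.comp]
  set A : Matrix (Fin (p+1)) (Fin (p+1)) ℝ :=
    Matrix.of fun i j => Fin.cases 1 (fun j' => f j' (x i)) j with hAdef
  set B : Matrix (Fin (p+1)) (Fin (p+1)) ℝ :=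
    Matrix.of (fun i j => Fin.cases (A 0 j) (fun i' => A i'.succ j - A 0 j) i) with hBdef
  have hAB : A.det = B.det := by
    apply Matrix.det_eq_of_forall_row_eq_smul_add_const
      (fun i => Fin.cases 0 (fun _ => 1) i) 0 rfl
    intro i j
    induction i using Fin.cases <;> simp [hBdef]
  have hBdet : B.det = Matrix.det (Matrix.of fun i j : Fin p => f i (x j.succ) - f i (x 0)) := by
    rw [Matrix.det_succ_column_zero]
    rw [Fin.sum_univ_succ]
    have h0 : ∀ i : Fin p, B i.succ 0 = 0 := by
      intro i; simp [hBdef, hAdef]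
    simp only [h0, mul_zero, zero_mul, Finset.sum_const_zero, add_zero]
    rw [← Matrix.det_transpose (Matrix.of fun i j : Fin p => f i (x j.succ) - f i (x 0))]
    simp only [hBdef, hAdef, Matrix.of_apply, Fin.cases_zero, Fin.val_zero, pow_zero, one_mul, mul_one]
    apply congrArg (Matrix.det (R := ℝ) (n := Fin p))
    ext m j
    simp [Fin.succAbove_zero]
  have hAdet : A.det = ∑ i : Fin (p+1),
      (-1:ℝ) ^ (i:ℕ) * Matrix.det (Matrix.of fun m j : Fin p => f j (x (i.succAbove m))) := by
    rw [Matrix.det_succ_column_zero]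
    refine Finset.sum_congr rfl fun i _ => ?_
    have : A i 0 = 1 := by simp [hAdef]
    rw [this, mul_one]
    congr 1
  calc kasDelta (altP (tens f)) x
      = ∑ i : Fin (p+1), (-1:ℝ)^(i:ℕ) * ((p.factorial : ℝ)⁻¹ *
          Matrix.det (Matrix.of fun m j : Fin p => f j (x (i.succAbove m)))) := by
        unfold kasDelta
        refine Finset.sum_congr rfl fun i _ => ?_
        rw [halt]
        rfl
    _ = (p.factorial : ℝ)⁻¹ * A.det := by
        rw [hAdet, Finset.mul_sum]
        refine Finset.sum_congr rfl fun i _ => by ring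
    _ = _ := by rw [hAB, hBdet]
end
end

section
/- For any set X, any integer p ≥ 1, any functions f_1,…,f_p : X → ℝ and any (x_0,x_1,…,x_p) ∈ X^{p+1}, one has δ_{p-1} Alt_p(f_1⊗⋯⊗f_p)(x_0,x_1,…,x_p) = Alt_p(δ_0 f_1(x_0,·)⊗⋯⊗δ_0 f_p(x_0,·))(x_1,…,x_p), where δ_0 f(x,y) := f(y) − f(x), so that the right-hand side is the antisymmetrization in (x_1,…,x_p) of the product Π_{i=1}^p (f_i(x_i) − f_i(x_0)). -/
noncomputable section

/-- `δ_{p-1} Alt_p(f_1⊗⋯⊗f_p)(x_0,x_1,…,x_p)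
      = Alt_p(δ_0 f_1(x_0,·)⊗⋯⊗δ_0 f_p(x_0,·))(x_1,…,x_p)`,
where `δ_0 f(x,y) = f(y) − f(x)`: the right-hand side is the antisymmetrization in
`(x_1,…,x_p)` of the product `Π_{i=1}^p (f_i(x_i) − f_i(x_0))`. -/
theorem kasDelta_altP_tens_eq_altP_delta0 (X : Type*) (p : ℕ) (hp : 1 ≤ p)
    (f : Fin p → X → ℝ) (x : Fin (p + 1) → X) :
    kasDelta (altP (tens f)) x =
      altP (tens fun i => fun y => f i y - f i (x 0)) (x ∘ Fin.succ) := by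
  -- Let M be the (p+1)×(p+1) matrix whose 0th column is all ones and whose
  -- (j+1)-st column is `f j (x i)`.
  set M : Matrix (Fin (p + 1)) (Fin (p + 1)) ℝ :=
    Matrix.of fun i j => Fin.cases 1 (fun j' => f j' (x i)) j with hM
  -- M', the result of subtracting row 0 from every other row.
  set M' : Matrix (Fin (p + 1)) (Fin (p + 1)) ℝ :=
    Matrix.of fun i j => if i = 0 then M 0 j else M i j - M 0 j with hM'
  have hdet : M.det = M'.det := by
    refine Matrix.det_eq_of_forall_row_eq_smul_add_const
      (fun i => if i = 0 then (0 : ℝ) else 1) 0 (by simp) (fun i j => ?_)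
    by_cases hi : i = 0 <;> simp [hM', hi]
  -- LHS equals (p!)⁻¹ det M
  have hL : kasDelta (altP (tens f)) x = ((p.factorial : ℝ))⁻¹ * M.det := by
    rw [Matrix.det_succ_column_zero, Finset.mul_sum]
    unfold kasDelta altP tens
    refine Finset.sum_congr rfl fun i _ => ?_
    rw [Matrix.det_apply]
    have h0 : M i 0 = 1 := rfl
    rw [h0]
    simp only [Units.smul_def, zsmul_eq_mul, Finset.mul_sum]
    refine Finset.sum_congr rfl fun σ _ => ?_
    have hsub : ∀ j, (M.submatrix i.succAbove Fin.succ) (σ j) j = f j (x (i.succAbove (σ j))) :=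
      fun j => rfl
    simp only [hsub, Function.comp_apply]
    ring
  -- RHS equals (p!)⁻¹ det M'
  have hR : altP (tens fun i => fun y => f i y - f i (x 0)) (x ∘ Fin.succ)
      = ((p.factorial : ℝ))⁻¹ * M'.det := by
    have hcol : ∀ i : Fin (p + 1), M' i 0 = if i = 0 then 1 else 0 := by
      intro i
      by_cases hi : i = 0 <;> simp [hM', hi, hM]
    rw [Matrix.det_succ_column_zero]
    rw [Finset.sum_eq_single 0 (by intro b _ hb; rw [hcol b, if_neg hb]; ring)
      (by simp)]
    rw [hcol 0, if_pos rfl]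
    unfold altP tens
    rw [Matrix.det_apply]
    simp only [Units.smul_def, zsmul_eq_mul, Fin.val_zero, pow_zero, one_mul, mul_one]
    congr 1
  rw [hL, hR, hdet]
end
end

section
/- For any set X, any integer p ≥ 1 and any functions g, f_1,…,f_p : X → ℝ, the identity ḡ · δ_{p-1} Alt_p(f_1⊗⋯⊗f_p) = Alt_{p+1}(g⊗f_1⊗⋯⊗f_p) + Σ_{k=1}^p Alt_{p+1}(𝟙⊗f_1⊗⋯⊗(f_k g)⊗⋯⊗f_p) holds pointwise on X^{p+1}, where in the k-th summand the factor f_k is replaced by the pointwise product f_k g, 𝟙 is the constant function 1, and ḡ(x_0,…,x_p) := (1/(p+1)) Σ_{i=0}^p g(x_i). -/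
noncomputable section

/-- `ḡ(x_0,…,x_{n-1}) := (1/n) Σ_{i=0}^{n-1} g(x_i)`. -/
def gbar {X : Type*} (n : ℕ) (g : X → ℝ) : (Fin n → X) → ℝ :=
  fun x => (n : ℝ)⁻¹ * ∑ i, g (x i)

section Aux
open Equiv Finset

variable {X : Type*} {p : ℕ}

/-- The coset map `(i, τ) ↦ σ` with `σ 0 = i` and `σ j.succ = i.succAbove (τ j)`. -/
def emapAux (p : ℕ) : Fin (p + 1) × Equiv.Perm (Fin p) → Equiv.Perm (Fin (p + 1)) :=
  fun iτ => (Fin.cycleRange iτ.1)⁻¹ * Equiv.Perm.decomposeFin.symm (0, iτ.2)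

theorem emapAux_zero (i : Fin (p + 1)) (τ : Equiv.Perm (Fin p)) : emapAux p (i, τ) 0 = i := by
  have h0 : Equiv.Perm.decomposeFin.symm ((0 : Fin (p+1)), τ) 0 = 0 :=
    Equiv.Perm.decomposeFin_symm_apply_zero 0 τ
  have h1 : (Fin.cycleRange i)⁻¹ 0 = i := by
    rw [Equiv.Perm.inv_eq_iff_eq]; exact (Fin.cycleRange_self i).symm
  simp [emapAux, Equiv.Perm.mul_apply, h0, h1]

theorem emapAux_succ (i : Fin (p + 1)) (τ : Equiv.Perm (Fin p)) (j : Fin p) :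
    emapAux p (i, τ) j.succ = i.succAbove (τ j) := by
  have h1 : Equiv.Perm.decomposeFin.symm ((0 : Fin (p+1)), τ) j.succ = (τ j).succ := by
    rw [Equiv.Perm.decomposeFin_symm_apply_succ]; simp
  have h2 : (Fin.cycleRange i)⁻¹ (τ j).succ = i.succAbove (τ j) := by
    rw [Equiv.Perm.inv_eq_iff_eq]; exact (Fin.cycleRange_succAbove i (τ j)).symm
  simp [emapAux, Equiv.Perm.mul_apply, h1, h2]

theorem emapAux_bij : Function.Bijective (emapAux p) := by
  rw [Fintype.bijective_iff_injective_and_card]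
  constructor
  · rintro ⟨i, τ⟩ ⟨i', τ'⟩ h
    have hi : i = i' := by
      have := congrArg (fun σ : Equiv.Perm (Fin (p+1)) => σ 0) h
      simpa [emapAux_zero] using this
    subst hi
    have h2 : Equiv.Perm.decomposeFin.symm ((0 : Fin (p+1)), τ)
        = Equiv.Perm.decomposeFin.symm ((0 : Fin (p+1)), τ') :=
      mul_left_cancel (a := (Fin.cycleRange i)⁻¹) h
    have := Equiv.Perm.decomposeFin.symm.injective h2
    simp_all
  · simp [Fintype.card_perm, Nat.factorial_succ, mul_comm]

theorem emapAux_sign (i : Fin (p + 1)) (τ : Equiv.Perm (Fin p)) :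
    ((Equiv.Perm.sign (emapAux p (i, τ)) : ℤ) : ℝ)
      = (-1 : ℝ) ^ (i : ℕ) * ((Equiv.Perm.sign τ : ℤ) : ℝ) := by
  rw [emapAux, map_mul, map_inv, Fin.sign_cycleRange, Equiv.Perm.decomposeFin.symm_sign]
  simp [inv_pow]

set_option maxHeartbeats 1000000 in
/-- Coset decomposition of the antisymmetrizer of a tensor with a distinguished first factor. -/
theorem altP_cons (h : X → ℝ) (f : Fin p → X → ℝ) (x : Fin (p + 1) → X) :
    altP (tens (Fin.cons h f)) x =
      ((p : ℝ) + 1)⁻¹ * ∑ i : Fin (p + 1),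
        (-1 : ℝ) ^ (i : ℕ) * (h (x i) * altP (tens f) (x ∘ i.succAbove)) := by
  have key : ∀ (i : Fin (p+1)) (τ : Equiv.Perm (Fin p)),
      tens (Fin.cons h f) (x ∘ (emapAux p (i, τ))) =
        h (x i) * tens f ((x ∘ i.succAbove) ∘ τ) := by
    intro i τ
    rw [tens, tens, Fin.prod_univ_succ]
    congr 1
    · simp [emapAux_zero]
    · exact Finset.prod_congr rfl fun j _ => by
        simp [emapAux_succ, Fin.cons_succ, Function.comp]
  rw [altP, ← Fintype.sum_bijective (emapAux p) emapAux_bij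
    (fun iτ => ((Equiv.Perm.sign (emapAux p iτ) : ℤ) : ℝ) * tens (Fin.cons h f) (x ∘ (emapAux p iτ)))
    (fun σ => ((Equiv.Perm.sign σ : ℤ) : ℝ) * tens (Fin.cons h f) (x ∘ σ))
    (fun iτ => rfl)]
  rw [Fintype.sum_prod_type]
  have step : ∀ i : Fin (p+1), ∑ τ : Equiv.Perm (Fin p),
      ((Equiv.Perm.sign (emapAux p (i, τ)) : ℤ) : ℝ) * tens (Fin.cons h f) (x ∘ (emapAux p (i, τ)))
      = (-1 : ℝ) ^ (i : ℕ) *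
          (h (x i) * ((Nat.factorial p : ℝ) * altP (tens f) (x ∘ i.succAbove))) := by
    intro i
    have hfac : (Nat.factorial p : ℝ) ≠ 0 := Nat.cast_ne_zero.mpr (Nat.factorial_ne_zero p)
    rw [altP, ← mul_assoc ((Nat.factorial p : ℝ)) _ _, mul_inv_cancel₀ hfac, one_mul,
      Finset.mul_sum, Finset.mul_sum]
    exact Finset.sum_congr rfl fun τ _ => by rw [key, emapAux_sign]; ring
  rw [Finset.sum_congr rfl fun i _ => step i, Nat.factorial_succ, Finset.mul_sum, Finset.mul_sum]
  refine Finset.sum_congr rfl fun i _ => ?_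
  have hfac : (Nat.factorial p : ℝ) ≠ 0 := Nat.cast_ne_zero.mpr (Nat.factorial_ne_zero p)
  push_cast
  field_simp

/-- Multiplying the antisymmetrized tensor by `Σ_j g(y_j)` distributes `g` over the factors. -/
theorem altP_tens_mul_sum (g : X → ℝ) (f : Fin p → X → ℝ) (y : Fin p → X) :
    altP (tens f) y * ∑ j, g (y j) =
      ∑ k : Fin p, altP (tens (Function.update f k (f k * g))) y := by
  have key : ∀ (τ : Equiv.Perm (Fin p)),
      ∑ k : Fin p, tens (Function.update f k (f k * g)) (y ∘ τ) =
        tens f (y ∘ τ) * ∑ j, g (y j) := by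
    intro τ
    have h1 : ∀ k : Fin p, tens (Function.update f k (f k * g)) (y ∘ τ)
        = tens f (y ∘ τ) * g (y (τ k)) := by
      intro k
      rw [tens, tens,
        Finset.prod_eq_mul_prod_sdiff_singleton_of_mem (Finset.mem_univ k),
        Finset.prod_eq_mul_prod_sdiff_singleton_of_mem (Finset.mem_univ k)
          (fun i => f i ((y ∘ τ) i))]
      have hrest : ∏ i ∈ Finset.univ \ {k}, Function.update f k (f k * g) i ((y ∘ τ) i)
          = ∏ i ∈ Finset.univ \ {k}, f i ((y ∘ τ) i) :=
        Finset.prod_congr rfl fun i hi => by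
          rw [Function.update_of_ne (by simpa using (Finset.mem_sdiff.mp hi).2)]
      rw [hrest, Function.update_self]
      simp only [Pi.mul_apply, Function.comp_apply]
      ring
    rw [Finset.sum_congr rfl fun k _ => h1 k, ← Finset.mul_sum]
    congr 1
    exact Equiv.sum_comp τ (fun j => g (y j))
  symm
  calc ∑ k : Fin p, altP (tens (Function.update f k (f k * g))) y
      = (p.factorial : ℝ)⁻¹ * ∑ τ : Equiv.Perm (Fin p), ∑ k : Fin p,
          ((Equiv.Perm.sign τ : ℤ) : ℝ) * tens (Function.update f k (f k * g)) (y ∘ τ) := by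
        simp only [altP]
        rw [← Finset.mul_sum, Finset.sum_comm]
    _ = (p.factorial : ℝ)⁻¹ * ∑ τ : Equiv.Perm (Fin p),
          ((Equiv.Perm.sign τ : ℤ) : ℝ) * tens f (y ∘ τ) * ∑ j, g (y j) := by
        congr 1
        refine Finset.sum_congr rfl fun τ _ => ?_
        rw [← Finset.mul_sum, key]
        ring
    _ = altP (tens f) y * ∑ j, g (y j) := by
        rw [altP, mul_assoc, Finset.sum_mul]

end Aux

set_option maxHeartbeats 1000000 in
/-- `ḡ ⬝ δ_{p-1} Alt_p(f_1⊗⋯⊗f_p)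
      = Alt_{p+1}(g⊗f_1⊗⋯⊗f_p) + Σ_{k=1}^p Alt_{p+1}(𝟙⊗f_1⊗⋯⊗(f_k g)⊗⋯⊗f_p)`,
pointwise on `X^{p+1}`, where in the `k`-th summand the factor `f_k` is replaced by the
pointwise product `f_k g` and `𝟙` is the constant function `1`. -/
theorem gbar_kasDelta_altP_tens {X : Type*} (p : ℕ) (hp : 1 ≤ p)
    (g : X → ℝ) (f : Fin p → X → ℝ) (x : Fin (p + 1) → X) :
    gbar (p + 1) g x * kasDelta (altP (tens f)) x =
      altP (tens (Fin.cons g f)) x +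
        ∑ k : Fin p,
          altP (tens (Fin.cons (fun _ => (1 : ℝ)) (Function.update f k (f k * g)))) x := by
  have hA : ∀ i : Fin (p+1), (∑ j, g (x j)) * altP (tens f) (x ∘ i.succAbove)
      = g (x i) * altP (tens f) (x ∘ i.succAbove)
        + ∑ k : Fin p, altP (tens (Function.update f k (f k * g))) (x ∘ i.succAbove) := by
    intro i
    rw [← altP_tens_mul_sum g f (x ∘ i.succAbove),
      Fin.sum_univ_succAbove (fun j => g (x j)) i]
    simp only [Function.comp_apply]
    ring
  have expand : (∑ j, g (x j)) *
        (∑ i : Fin (p+1), (-1:ℝ)^(i:ℕ) * altP (tens f) (x ∘ i.succAbove))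
      = (∑ i : Fin (p+1), (-1:ℝ)^(i:ℕ) * (g (x i) * altP (tens f) (x ∘ i.succAbove)))
        + ∑ i : Fin (p+1), ∑ k : Fin p,
            (-1:ℝ)^(i:ℕ) * altP (tens (Function.update f k (f k * g))) (x ∘ i.succAbove) := by
    rw [Finset.mul_sum, ← Finset.sum_add_distrib]
    refine Finset.sum_congr rfl fun i _ => ?_
    rw [mul_left_comm, hA i, mul_add, Finset.mul_sum]
  have hRHS : ∀ k : Fin p,
      altP (tens (Fin.cons (fun _ => (1:ℝ)) (Function.update f k (f k * g)))) x
      = ((p:ℝ)+1)⁻¹ * ∑ i : Fin (p+1), (-1:ℝ)^(i:ℕ) *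
          altP (tens (Function.update f k (f k * g))) (x ∘ i.succAbove) := by
    intro k
    rw [altP_cons]
    simp only [one_mul]
  rw [gbar, kasDelta, altP_cons g f x, Finset.sum_congr rfl fun k _ => hRHS k]
  have hc : ((p + 1 : ℕ) : ℝ) = (p : ℝ) + 1 := by push_cast; ring
  rw [hc, mul_assoc, expand, mul_add]
  congr 1
  rw [Finset.sum_comm, Finset.mul_sum]
end
end

section
/- Let n ≥ 1, p ≥ 1 be integers, let f_1,…,f_p, g : ℝ^n → ℝ be continuously differentiable, let x ∈ ℝ^n and v_1,…,v_p ∈ ℝ^n. Put F := ḡ · δ_{p-1} Alt_p(f_1⊗⋯⊗f_p) : (ℝ^n)^{p+1} → ℝ and h(t_1,…,t_p) := F(x, x + t_1 v_1, …, x + t_p v_p). Then the iterated mixed partial derivative ∂^p h / ∂t_1 ⋯ ∂t_p at t_1 = ⋯ = t_p = 0 exists and equals (1/p!) · g(x) · det[ (Df_i(x)(v_j))_{i,j=1}^p ], where Df_i(x)(v_j) denotes the directional derivative of f_i at x in direction v_j. -/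
noncomputable section

/-- `IsMixedPartial l h H` says that `H` is the iterated mixed partial derivative of
`h : (Fin p → ℝ) → ℝ` with respect to the variables listed in `l`, the head of the list
being the variable differentiated in last (outermost); existence of each intermediate
partial derivative is part of the statement. -/
def IsMixedPartial {p : ℕ} : List (Fin p) → ((Fin p → ℝ) → ℝ) → ((Fin p → ℝ) → ℝ) → Prop
  | [], h, H => H = h
  | i :: rest, h, H => ∃ G, IsMixedPartial rest h G ∧
      ∀ t : Fin p → ℝ, HasDerivAt (fun s => G (Function.update t i s)) (H t) (t i)

/- ### Auxiliary lemmas -/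

theorem imp_const_mul {p : ℕ} {l : List (Fin p)} {h H : (Fin p → ℝ) → ℝ} (c : ℝ)
    (hh : IsMixedPartial l h H) :
    IsMixedPartial l (fun t => c * h t) (fun t => c * H t) := by
  induction l generalizing h H with
  | nil => simp only [IsMixedPartial] at hh ⊢; rw [hh]
  | cons i rest ih =>
    obtain ⟨G, hG, hd⟩ := hh
    exact ⟨fun t => c * G t, ih hG, fun t => (hd t).const_mul c⟩

theorem imp_sum {p : ℕ} {ι : Type*} [Fintype ι] (l : List (Fin p))
    (h H : ι → (Fin p → ℝ) → ℝ) (hh : ∀ a, IsMixedPartial l (h a) (H a)) :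
    IsMixedPartial l (fun t => ∑ a, h a t) (fun t => ∑ a, H a t) := by
  induction l generalizing h H with
  | nil =>
    simp only [IsMixedPartial] at hh ⊢
    funext t; exact Finset.sum_congr rfl fun a _ => by rw [hh a]
  | cons i rest ih =>
    choose G hG hd using hh
    refine ⟨fun t => ∑ a, G a t, ih _ _ hG, fun t => ?_⟩
    exact HasDerivAt.fun_sum fun a _ => hd a t

theorem imp_prod {p : ℕ} (l : List (Fin p)) (hl : l.Nodup) (u u' : Fin p → ℝ → ℝ)
    (hu : ∀ j ∈ l, ∀ s, HasDerivAt (u j) (u' j s) s) :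
    IsMixedPartial l (fun t => ∏ j, u j (t j))
      (fun t => ∏ j, if j ∈ l then u' j (t j) else u j (t j)) := by
  induction l with
  | nil => simp [IsMixedPartial]
  | cons i rest ih =>
    obtain ⟨hi, hrest⟩ := List.nodup_cons.mp hl
    refine ⟨_, ih hrest (fun j hj s => hu j (List.mem_cons_of_mem _ hj) s), ?_⟩
    intro t
    have key : (fun s => ∏ j, if j ∈ rest then u' j (Function.update t i s j)
          else u j (Function.update t i s j)) =
        fun s => u i s * ∏ j ∈ Finset.univ.erase i,
          (if j ∈ rest then u' j (t j) else u j (t j)) := by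
      funext s
      rw [← Finset.mul_prod_erase Finset.univ _ (Finset.mem_univ i)]
      rw [Function.update_self, if_neg hi]
      congr 1
      refine Finset.prod_congr rfl fun j hj => ?_
      rw [Function.update_of_ne (Finset.ne_of_mem_erase hj)]
    rw [key]
    have goalval : (∏ j, if j ∈ i :: rest then u' j (t j) else u j (t j)) =
        u' i (t i) * ∏ j ∈ Finset.univ.erase i,
          (if j ∈ rest then u' j (t j) else u j (t j)) := by
      rw [← Finset.mul_prod_erase Finset.univ _ (Finset.mem_univ i)]
      rw [if_pos (List.mem_cons_self : i ∈ i :: rest)]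
      congr 1
      refine Finset.prod_congr rfl fun j hj => ?_
      have : j ≠ i := Finset.ne_of_mem_erase hj
      simp [List.mem_cons, this]
    convert (hu i (List.mem_cons_self : i ∈ i :: rest) (t i)).mul_const
      (∏ j ∈ Finset.univ.erase i, if j ∈ rest then u' j (t j) else u j (t j)) using 1
    all_goals rfl

theorem imp_prod_finRange {p : ℕ} (u u' : Fin p → ℝ → ℝ)
    (hu : ∀ j, ∀ s : ℝ, HasDerivAt (u j) (u' j s) s) :
    IsMixedPartial (List.finRange p) (fun t => ∏ j, u j (t j))
      (fun t => ∏ j, u' j (t j)) := by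
  have := imp_prod (List.finRange p) (List.nodup_finRange p) u u' (fun j _ s => hu j s)
  simpa [List.mem_finRange] using this

theorem altP_tens_eq_det {X : Type*} {p : ℕ} (f : Fin p → X → ℝ) (w : Fin p → X) :
    altP (tens f) w = (Nat.factorial p : ℝ)⁻¹ *
      Matrix.det (Matrix.of fun m j : Fin p => f m (w j)) := by
  unfold altP tens
  congr 1
  rw [Matrix.det_apply']
  refine Fintype.sum_equiv (Equiv.inv (Equiv.Perm (Fin p))) _ _ fun σ => ?_
  have h1 : ((Equiv.Perm.sign σ⁻¹ : ℤ) : ℝ) = ((Equiv.Perm.sign σ : ℤ) : ℝ) := by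
    rw [Equiv.Perm.sign_inv]
  have h2 : (∏ i, f (σ⁻¹ i) (w i)) = ∏ m, f m ((w ∘ σ) m) := by
    rw [← Equiv.prod_comp σ (fun i => f (σ⁻¹ i) (w i))]
    simp
  simp only [Equiv.inv_apply, Matrix.of_apply]
  rw [h1, h2]

theorem key_kasDelta {X : Type*} {p : ℕ} (f : Fin p → X → ℝ) (x : X) (z : Fin p → X) :
    kasDelta (altP (tens f)) (Fin.cons x z) = (Nat.factorial p : ℝ)⁻¹ *
      ∑ σ : Equiv.Perm (Fin p), ((Equiv.Perm.sign σ : ℤ) : ℝ) *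
        ∏ j, (f (σ j) (z j) - f (σ j) x) := by
  set y : Fin (p + 1) → X := Fin.cons x z with hy
  set B : Matrix (Fin (p + 1)) (Fin (p + 1)) ℝ :=
    Matrix.of fun r s => Fin.cases 1 (fun m => f m (y s)) r with hB
  set G : Matrix (Fin (p + 1)) (Fin (p + 1)) ℝ :=
    Matrix.of fun r s =>
      Fin.cases (Fin.cases (1 : ℝ) (fun _ => 0) s)
        (fun m => Fin.cases (f m x) (fun j => f m (z j) - f m x) s) r with hG
  set E : Matrix (Fin (p + 1)) (Fin (p + 1)) ℝ :=
    Matrix.of fun r s => if r = 0 then 1 else if r = s then 1 else 0 with hE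
  have hBGE : B = G * E := by
    ext r s
    rw [Matrix.mul_apply, Fin.sum_univ_succ]
    cases s using Fin.cases with
    | zero =>
      cases r using Fin.cases with
      | zero => simp [hB, hG, hE, hy, Fin.succ_ne_zero]
      | succ m => simp [hB, hG, hE, hy, Fin.succ_ne_zero]
    | succ j =>
      cases r using Fin.cases with
      | zero => simp [hB, hG, hE, hy, Fin.succ_ne_zero, Fin.succ_inj]
      | succ m => simp [hB, hG, hE, hy, Fin.succ_ne_zero, Fin.succ_inj]
  have hEtri : E.BlockTriangular id := by
    intro i j hij
    have hi0 : i ≠ 0 := by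
      intro h; rw [h] at hij; exact (Fin.not_lt_zero _) hij
    have hne : i ≠ j := fun h => absurd (h ▸ hij) (lt_irrefl _)
    simp [hE, hi0, hne]
  have hdetE : E.det = 1 := by
    rw [Matrix.det_of_upperTriangular hEtri]
    refine Finset.prod_eq_one fun i _ => by simp [hE]
  have hdetB : B.det = G.det := by rw [hBGE, Matrix.det_mul, hdetE, mul_one]
  have hdetG : G.det = Matrix.det (Matrix.of fun m j : Fin p => f m (z j) - f m x) := by
    rw [Matrix.det_succ_row_zero, Fin.sum_univ_succ]
    have h0 : ∀ j : Fin p, G 0 j.succ = 0 := fun j => by simp [hG]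
    have h00 : G 0 0 = 1 := by simp [hG]
    simp only [h0, h00, mul_one, one_mul, mul_zero, zero_mul, Finset.sum_const_zero, add_zero,
      Fin.val_zero, pow_zero]
    congr 1
  have hmain : kasDelta (altP (tens f)) y = (Nat.factorial p : ℝ)⁻¹ * B.det := by
    unfold kasDelta
    rw [Matrix.det_succ_row_zero B, Finset.mul_sum]
    refine Finset.sum_congr rfl fun i _ => ?_
    rw [altP_tens_eq_det]
    have hB0 : B 0 i = 1 := by simp [hB]
    have hsub : (Matrix.of fun m j : Fin p => f m ((y ∘ i.succAbove) j)) =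
        B.submatrix Fin.succ i.succAbove := by
      ext m j
      simp [hB, Matrix.submatrix_apply]
    rw [hsub, hB0]
    ring
  rw [hmain, hdetB, hdetG, Matrix.det_apply']
  congr 1

/-- The slot functions. -/
def uFun {X : Type*} [NormedAddCommGroup X] [NormedSpace ℝ X] {p : ℕ}
    (g : X → ℝ) (f : Fin p → X → ℝ) (x : X) (v : Fin p → X)
    (k : Fin (p + 1)) (σ : Equiv.Perm (Fin p)) (j : Fin p) (s : ℝ) : ℝ :=
  (if k = j.succ then g (x + s • v j) else 1) * (f (σ j) (x + s • v j) - f (σ j) x)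

/-- The derivatives of the slot functions. -/
def uFun' {X : Type*} [NormedAddCommGroup X] [NormedSpace ℝ X] {p : ℕ}
    (g : X → ℝ) (f : Fin p → X → ℝ) (x : X) (v : Fin p → X)
    (k : Fin (p + 1)) (σ : Equiv.Perm (Fin p)) (j : Fin p) (s : ℝ) : ℝ :=
  (if k = j.succ then fderiv ℝ g (x + s • v j) (v j) else 0) *
      (f (σ j) (x + s • v j) - f (σ j) x) +
    (if k = j.succ then g (x + s • v j) else 1) * fderiv ℝ (f (σ j)) (x + s • v j) (v j)

theorem hasDerivAt_uFun {X : Type*} [NormedAddCommGroup X] [NormedSpace ℝ X] {p : ℕ}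
    (g : X → ℝ) (f : Fin p → X → ℝ) (x : X) (v : Fin p → X)
    (hf : ∀ i, ContDiff ℝ 1 (f i)) (hg : ContDiff ℝ 1 g)
    (k : Fin (p + 1)) (σ : Equiv.Perm (Fin p)) (j : Fin p) (s : ℝ) :
    HasDerivAt (uFun g f x v k σ j) (uFun' g f x v k σ j s) s := by
  have hline : HasDerivAt (fun s : ℝ => x + s • v j) (v j) s := by
    simpa using ((hasDerivAt_id s).smul_const (v j)).const_add x
  have hfd : HasDerivAt (fun s : ℝ => f (σ j) (x + s • v j) - f (σ j) x)
      (fderiv ℝ (f (σ j)) (x + s • v j) (v j)) s := by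
    have hdiff := ((hf (σ j)).differentiable one_ne_zero).differentiableAt
      (x := x + s • v j)
    exact (hdiff.hasFDerivAt.comp_hasDerivAt s hline).sub_const _
  unfold uFun uFun'
  by_cases hk : k = j.succ
  · simp only [if_pos hk]
    have hgd : HasDerivAt (fun s : ℝ => g (x + s • v j))
        (fderiv ℝ g (x + s • v j) (v j)) s := by
      have hdiff := (hg.differentiable one_ne_zero).differentiableAt (x := x + s • v j)
      exact hdiff.hasFDerivAt.comp_hasDerivAt s hline
    exact hgd.mul hfd
  · simp only [if_neg hk]
    exact (hasDerivAt_const s (1 : ℝ)).mul hfd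

/-- For C¹ functions `g, f_1, …, f_p : ℝ^n → ℝ`, a point `x` and directions `v_1, …, v_p`,
the iterated mixed partial derivative `∂^p/∂t_1⋯∂t_p` of
`h(t_1,…,t_p) := (ḡ ⬝ δ_{p-1} Alt_p(f_1⊗⋯⊗f_p))(x, x+t_1v_1, …, x+t_pv_p)` at
`t_1 = ⋯ = t_p = 0` exists and equals `(1/p!) g(x) det[(Df_i(x)(v_j))_{i,j}]`. -/
theorem mixedPartial_gbar_kasDelta_altP_tens (n p : ℕ) (hn : 1 ≤ n) (hp : 1 ≤ p)
    (f : Fin p → EuclideanSpace ℝ (Fin n) → ℝ) (g : EuclideanSpace ℝ (Fin n) → ℝ)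
    (hf : ∀ i, ContDiff ℝ 1 (f i)) (hg : ContDiff ℝ 1 g)
    (x : EuclideanSpace ℝ (Fin n)) (v : Fin p → EuclideanSpace ℝ (Fin n)) :
    ∃ H : (Fin p → ℝ) → ℝ,
      IsMixedPartial (List.finRange p)
        (fun t => (gbar (p + 1) g * kasDelta (altP (tens f)))
          (Fin.cons x fun j => x + t j • v j)) H ∧
      H 0 = (Nat.factorial p : ℝ)⁻¹ * g x *
        Matrix.det (Matrix.of fun i j : Fin p => fderiv ℝ (f i) x (v j)) := by
  classical
  -- splitting off the `g` factor
  have hgsplit : ∀ (t : Fin p → ℝ) (k : Fin (p + 1)),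
      g ((Fin.cons x (fun j => x + t j • v j) : Fin (p + 1) → EuclideanSpace ℝ (Fin n)) k) =
        (if k = 0 then g x else 1) * ∏ j, (if k = j.succ then g (x + t j • v j) else 1) := by
    intro t k
    cases k using Fin.cases with
    | zero =>
      have hc : ∀ j : Fin p, ¬((0 : Fin (p + 1)) = j.succ) :=
        fun j h => Fin.succ_ne_zero j h.symm
      simp [hc]
    | succ j₀ =>
      simp [Fin.succ_ne_zero, Fin.succ_inj, Finset.prod_ite_eq]
  have hk0 : ∀ k : Fin (p + 1),
      (if k = 0 then g x else 1) * ∏ j : Fin p, (if k = j.succ then g x else 1) = g x := by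
    intro k
    cases k using Fin.cases with
    | zero =>
      have hc : ∀ j : Fin p, ¬((0 : Fin (p + 1)) = j.succ) :=
        fun j h => Fin.succ_ne_zero j h.symm
      simp [hc]
    | succ j₀ =>
      simp [Fin.succ_ne_zero, Fin.succ_inj, Finset.prod_ite_eq]
  -- the function as a sum of separable products
  have hsum : ∀ t : Fin p → ℝ,
      (gbar (p + 1) g * kasDelta (altP (tens f))) (Fin.cons x fun j => x + t j • v j) =
        ∑ a : Fin (p + 1) × Equiv.Perm (Fin p),
          (((p + 1 : ℕ) : ℝ)⁻¹ * (Nat.factorial p : ℝ)⁻¹ * ((Equiv.Perm.sign a.2 : ℤ) : ℝ) *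
              (if a.1 = 0 then g x else 1)) *
            ∏ j, uFun g f x v a.1 a.2 j (t j) := by
    intro t
    rw [Pi.mul_apply, key_kasDelta, Fintype.sum_prod_type]
    unfold gbar
    rw [show ∀ (a b A B : ℝ), (a * A) * (b * B) = (a * b) * (A * B) from fun a b A B => by ring]
    rw [Finset.sum_mul_sum, Finset.mul_sum]
    refine Finset.sum_congr rfl fun k _ => ?_
    rw [Finset.mul_sum]
    refine Finset.sum_congr rfl fun σ _ => ?_
    rw [hgsplit t k]
    unfold uFun
    rw [Finset.prod_mul_distrib]
    ring
  refine ⟨fun t => ∑ a : Fin (p + 1) × Equiv.Perm (Fin p),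
      (((p + 1 : ℕ) : ℝ)⁻¹ * (Nat.factorial p : ℝ)⁻¹ * ((Equiv.Perm.sign a.2 : ℤ) : ℝ) *
        (if a.1 = 0 then g x else 1)) * ∏ j, uFun' g f x v a.1 a.2 j (t j), ?_, ?_⟩
  · rw [funext hsum]
    exact imp_sum _ _ _ fun a => imp_const_mul _
      (imp_prod_finRange _ _ fun j s => hasDerivAt_uFun g f x v hf hg a.1 a.2 j s)
  · beta_reduce
    have hu'0 : ∀ (k : Fin (p + 1)) (σ : Equiv.Perm (Fin p)) (j : Fin p),
        uFun' g f x v k σ j ((0 : Fin p → ℝ) j) =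
          (if k = j.succ then g x else 1) * fderiv ℝ (f (σ j)) x (v j) := by
      intro k σ j
      unfold uFun'
      norm_num
    have step1 : (∑ a : Fin (p + 1) × Equiv.Perm (Fin p),
          (((p + 1 : ℕ) : ℝ)⁻¹ * (Nat.factorial p : ℝ)⁻¹ * ((Equiv.Perm.sign a.2 : ℤ) : ℝ) *
            (if a.1 = 0 then g x else 1)) * ∏ j, uFun' g f x v a.1 a.2 j ((0 : Fin p → ℝ) j)) =
        ∑ a : Fin (p + 1) × Equiv.Perm (Fin p),
          (((p + 1 : ℕ) : ℝ)⁻¹ * (Nat.factorial p : ℝ)⁻¹) *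
            (((Equiv.Perm.sign a.2 : ℤ) : ℝ) *
              (g x * ∏ j, fderiv ℝ (f (a.2 j)) x (v j))) := by
      refine Finset.sum_congr rfl fun a _ => ?_
      simp only [hu'0]
      rw [Finset.prod_mul_distrib]
      linear_combination (((p + 1 : ℕ) : ℝ)⁻¹ * (Nat.factorial p : ℝ)⁻¹ *
        ((Equiv.Perm.sign a.2 : ℤ) : ℝ) * ∏ j, fderiv ℝ (f (a.2 j)) x (v j)) * hk0 a.1
    rw [step1, Fintype.sum_prod_type]
    simp only []
    rw [Finset.sum_const, Finset.card_univ, Fintype.card_fin,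
      nsmul_eq_mul, Matrix.det_apply', Finset.mul_sum, Finset.mul_sum]
    refine Finset.sum_congr rfl fun σ _ => ?_
    simp only [Matrix.of_apply]
    have hN : ((p + 1 : ℕ) : ℝ) ≠ 0 := Nat.cast_ne_zero.mpr (Nat.succ_ne_zero p)
    field_simp
end
end

section
/- Let n ≥ 1, p ≥ 1 be integers, let f_1,…,f_p, g : ℝ^n → ℝ be continuously differentiable, let x ∈ ℝ^n and v_1,…,v_p ∈ ℝ^n. Put h(t_1,…,t_p) := (g ⊗ Alt_p(f_1⊗⋯⊗f_p))(x, x + t_1 v_1, …, x + t_p v_p) = g(x) · Alt_p(f_1⊗⋯⊗f_p)(x + t_1 v_1, …, x + t_p v_p). Then the iterated mixed partial derivative ∂^p h / ∂t_1 ⋯ ∂t_p at t_1 = ⋯ = t_p = 0 exists and equals (1/p!) · g(x) · det[ (Df_i(x)(v_j))_{i,j=1}^p ], where Df_i(x)(v_j) denotes the directional derivative of f_i at x in direction v_j. -/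
noncomputable section

lemma IsMixedPartial.congr' {p : ℕ} {l : List (Fin p)} {h h' H H' : (Fin p → ℝ) → ℝ}
    (hl : IsMixedPartial l h H) (e1 : ∀ t, h t = h' t) (e2 : ∀ t, H t = H' t) :
    IsMixedPartial l h' H' := by
  have eh : h = h' := funext e1
  have eH : H = H' := funext e2
  subst eh; subst eH; exact hl

lemma IsMixedPartial.const_mul {p : ℕ} {l : List (Fin p)} {h H : (Fin p → ℝ) → ℝ} (c : ℝ)
    (hl : IsMixedPartial l h H) :
    IsMixedPartial l (fun t => c * h t) (fun t => c * H t) := by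
  induction l generalizing h H with
  | nil => simp only [IsMixedPartial] at hl ⊢; rw [hl]
  | cons i rest ih =>
    obtain ⟨G, hG, hd⟩ := hl
    exact ⟨fun t => c * G t, ih hG, fun t => by simpa using (hd t).const_mul c⟩

lemma isMixedPartial_sum {p : ℕ} {ι : Type*} [Fintype ι] {l : List (Fin p)}
    {h H : ι → (Fin p → ℝ) → ℝ}
    (hl : ∀ a, IsMixedPartial l (h a) (H a)) :
    IsMixedPartial l (fun t => ∑ a, h a t) (fun t => ∑ a, H a t) := by
  induction l generalizing h H with
  | nil =>
    simp only [IsMixedPartial] at hl ⊢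
    funext t; exact Finset.sum_congr rfl fun a _ => by rw [hl a]
  | cons i rest ih =>
    choose G hG hd using hl
    refine ⟨fun t => ∑ a, G a t, ih hG, fun t => ?_⟩
    exact HasDerivAt.fun_sum fun a _ => hd a t

lemma isMixedPartial_prod {p : ℕ} (l : List (Fin p)) (hl : l.Nodup)
    (φ φ' : Fin p → ℝ → ℝ) (hφ : ∀ j t, HasDerivAt (φ j) (φ' j t) t) :
    IsMixedPartial l (fun t => ∏ j, φ j (t j))
      (fun t => ∏ j, if j ∈ l then φ' j (t j) else φ j (t j)) := by
  induction l with
  | nil => simp [IsMixedPartial]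
  | cons i rest ih =>
    have hi : i ∉ rest := (List.nodup_cons.1 hl).1
    refine ⟨_, ih (List.nodup_cons.1 hl).2, fun t => ?_⟩
    have key : ∀ s : ℝ,
        (∏ j, if j ∈ rest then φ' j (Function.update t i s j)
          else φ j (Function.update t i s j)) =
        φ i s * ∏ j ∈ Finset.univ.erase i,
          (if j ∈ rest then φ' j (t j) else φ j (t j)) := by
      intro s
      rw [← Finset.mul_prod_erase Finset.univ _ (Finset.mem_univ i)]
      rw [if_neg hi, Function.update_self]
      congr 1
      refine Finset.prod_congr rfl fun j hj => ?_
      rw [Function.update_of_ne (Finset.ne_of_mem_erase hj)]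
    have key2 : (∏ j, if j ∈ i :: rest then φ' j (t j) else φ j (t j)) =
        φ' i (t i) * ∏ j ∈ Finset.univ.erase i,
          (if j ∈ rest then φ' j (t j) else φ j (t j)) := by
      rw [← Finset.mul_prod_erase Finset.univ _ (Finset.mem_univ i)]
      rw [if_pos List.mem_cons_self]
      congr 1
      refine Finset.prod_congr rfl fun j hj => ?_
      have : j ≠ i := Finset.ne_of_mem_erase hj
      simp [List.mem_cons, this]
    simp only [key, key2]
    exact (hφ i (t i)).mul_const _

/-- For C¹ functions `g, f_1, …, f_p : ℝ^n → ℝ`, a point `x` and directions `v_1, …, v_p`,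
the iterated mixed partial derivative `∂^p/∂t_1⋯∂t_p` of
`h(t_1,…,t_p) := g(x) ⬝ Alt_p(f_1⊗⋯⊗f_p)(x+t_1v_1, …, x+t_pv_p)` at
`t_1 = ⋯ = t_p = 0` exists and equals `(1/p!) g(x) det[(Df_i(x)(v_j))_{i,j}]`. -/
theorem mixedPartial_g_altP_tens (n p : ℕ) (hn : 1 ≤ n) (hp : 1 ≤ p)
    (f : Fin p → EuclideanSpace ℝ (Fin n) → ℝ) (g : EuclideanSpace ℝ (Fin n) → ℝ)
    (hf : ∀ i, ContDiff ℝ 1 (f i)) (hg : ContDiff ℝ 1 g)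
    (x : EuclideanSpace ℝ (Fin n)) (v : Fin p → EuclideanSpace ℝ (Fin n)) :
    ∃ H : (Fin p → ℝ) → ℝ,
      IsMixedPartial (List.finRange p)
        (fun t => g x * altP (tens f) fun j => x + t j • v j) H ∧
      H 0 = (Nat.factorial p : ℝ)⁻¹ * g x *
        Matrix.det (Matrix.of fun i j : Fin p => fderiv ℝ (f i) x (v j)) := by
  classical
  set φ : Equiv.Perm (Fin p) → Fin p → ℝ → ℝ :=
    fun σ j s => f (σ⁻¹ j) (x + s • v j) with hφdef
  set φ' : Equiv.Perm (Fin p) → Fin p → ℝ → ℝ :=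
    fun σ j s => fderiv ℝ (f (σ⁻¹ j)) (x + s • v j) (v j) with hφ'def
  have hderiv : ∀ σ j (t : ℝ), HasDerivAt (φ σ j) (φ' σ j t) t := by
    intro σ j t
    have h1 : HasDerivAt (fun s : ℝ => x + s • v j) (v j) t := by
      have := ((hasDerivAt_id t).smul_const (v j)).const_add x
      simpa using this
    exact (((hf (σ⁻¹ j)).differentiable one_ne_zero (x + t • v j)).hasFDerivAt).comp_hasDerivAt t h1
  -- mixed partial of each permutation term
  have hprod : ∀ σ : Equiv.Perm (Fin p),
      IsMixedPartial (List.finRange p) (fun t => ∏ j, φ σ j (t j))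
        (fun t => ∏ j, φ' σ j (t j)) := by
    intro σ
    have := isMixedPartial_prod (List.finRange p) (List.nodup_finRange p) (φ σ) (φ' σ)
      (hderiv σ)
    refine this.congr' (fun t => rfl) fun t => ?_
    exact Finset.prod_congr rfl fun j _ => by rw [if_pos (List.mem_finRange j)]
  have hsum := isMixedPartial_sum (l := List.finRange p)
    (h := fun σ t => ((Equiv.Perm.sign σ : ℤ) : ℝ) * ∏ j, φ σ j (t j))
    (H := fun σ t => ((Equiv.Perm.sign σ : ℤ) : ℝ) * ∏ j, φ' σ j (t j))
    (fun σ => (hprod σ).const_mul _)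
  have hmain := ((hsum.const_mul ((Nat.factorial p : ℝ)⁻¹)).const_mul (g x))
  refine ⟨_, hmain.congr' (fun t => ?_) (fun t => rfl), ?_⟩
  · -- identify with g x * altP (tens f) ...
    simp only [altP, tens]
    congr 2
    refine Finset.sum_congr rfl fun σ _ => ?_
    congr 1
    calc (∏ j, φ σ j (t j)) = ∏ j, φ σ (σ j) (t (σ j)) :=
          (Equiv.prod_comp σ fun j => φ σ j (t j)).symm
      _ = ∏ i, f i ((fun j => x + t j • v j) (σ i)) := by
          refine Finset.prod_congr rfl fun i _ => ?_
          simp [hφdef]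
  · -- value at 0
    have e1 : ∀ σ : Equiv.Perm (Fin p), (∏ j, φ' σ j ((0 : Fin p → ℝ) j)) =
        ∏ j, fderiv ℝ (f (σ⁻¹ j)) x (v j) := by
      intro σ
      refine Finset.prod_congr rfl fun j _ => ?_
      simp [hφ'def]
    have e2 : Matrix.det (Matrix.of fun i j : Fin p => fderiv ℝ (f i) x (v j)) =
        ∑ σ : Equiv.Perm (Fin p), ((Equiv.Perm.sign σ : ℤ) : ℝ) *
          ∏ j, fderiv ℝ (f (σ⁻¹ j)) x (v j) := by
      rw [Matrix.det_apply]
      rw [← Equiv.sum_comp (Equiv.inv (Equiv.Perm (Fin p)))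
        (fun σ => ((Equiv.Perm.sign σ : ℤ) : ℝ) * ∏ j, fderiv ℝ (f (σ⁻¹ j)) x (v j))]
      refine Finset.sum_congr rfl fun σ _ => ?_
      simp [Units.smul_def, zsmul_eq_mul, Matrix.of_apply]
    simp only [e1, e2]
    ring
end
end

section
/- Let p, q ≥ 1 be integers. Let a and b be finitely supported real-valued functions on the finite subsets of ℕ such that a(I) = 0 whenever |I| ≠ p and b(J) = 0 whenever |J| ≠ q, and let ε assign to every pair (I,J) of finite subsets of ℕ a real number with |ε(I,J)| ≤ 1. For each finite K ⊆ ℕ with |K| = p+q set c(K) := Σ_{I ⊆ K, |I| = p} ε(I, K∖I) · a(I) · b(K∖I). Then Σ_{K finite, |K| = p+q} c(K)² ≤ ( (p+q)! / (p! q!) )² · ( Σ_{I} a(I)² ) · ( Σ_{J} b(J)² ), all sums being finite by the support assumptions. -/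
noncomputable section

open Finset in
/-- Coefficient form, in an orthonormal basis, of the estimate
`‖v ∧ w‖_{Λ^{p+q}} ≤ ((p+q)!/(p!q!)) ‖v‖_{Λ^p} ‖w‖_{Λ^q}` for the wedge product on exterior
powers of a Hilbert space: `a` and `b` are the (finitely supported) coefficient families of
`v` and `w`, supported on index sets of cardinalities `p` and `q` respectively, `ε(I,J)` is
the sign of the shuffle permutation, and
`c(K) = Σ_{I ⊆ K, |I| = p} ε(I, K∖I) a(I) b(K∖I)` are the coefficients of `v ∧ w`. -/
theorem wedge_coefficient_estimate (p q : ℕ) (hp : 1 ≤ p) (hq : 1 ≤ q)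
    (a b : Finset ℕ → ℝ) (ε : Finset ℕ → Finset ℕ → ℝ)
    (ha : {I : Finset ℕ | a I ≠ 0}.Finite) (hb : {J : Finset ℕ | b J ≠ 0}.Finite)
    (hap : ∀ I : Finset ℕ, I.card ≠ p → a I = 0)
    (hbq : ∀ J : Finset ℕ, J.card ≠ q → b J = 0)
    (hε : ∀ I J : Finset ℕ, |ε I J| ≤ 1) :
    (∑ᶠ K ∈ {K : Finset ℕ | K.card = p + q},
        (∑ I ∈ Finset.powersetCard p K, ε I (K \ I) * a I * b (K \ I)) ^ 2) ≤
      ((Nat.factorial (p + q) : ℝ) / (Nat.factorial p * Nat.factorial q)) ^ 2 *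
        (∑ᶠ I : Finset ℕ, a I ^ 2) * (∑ᶠ J : Finset ℕ, b J ^ 2) := by
  classical
  set A : Finset (Finset ℕ) := ha.toFinset with hA
  set B : Finset (Finset ℕ) := hb.toFinset with hB
  set c : Finset ℕ → ℝ := fun K => ∑ I ∈ Finset.powersetCard p K, ε I (K \ I) * a I * b (K \ I)
    with hc
  set S : Finset (Finset ℕ) :=
    ((A ×ˢ B).image (fun u => u.1 ∪ u.2)).filter (fun K => K.card = p + q) with hS
  -- the binomial coefficient
  set C : ℝ := (Nat.choose (p + q) p : ℝ) with hC
  have hCval : ((Nat.factorial (p + q) : ℝ) / (Nat.factorial p * Nat.factorial q)) = C := by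
    rw [hC, div_eq_iff (by positivity)]
    have h := Nat.choose_mul_factorial_mul_factorial (Nat.le_add_right p q)
    rw [Nat.add_sub_cancel_left] at h
    have : ((p + q).choose p * p.factorial * q.factorial : ℝ) = ((p+q).factorial : ℝ) := by
      exact_mod_cast congrArg (Nat.cast : ℕ → ℝ) h
    linarith [this]
  have hC1 : (1 : ℝ) ≤ C := by
    rw [hC]
    exact_mod_cast Nat.one_le_iff_ne_zero.mpr (Nat.choose_pos (Nat.le_add_right p q)).ne'
  -- rewrite the LHS finsum as a finite sum over S
  have hLHS : (∑ᶠ K ∈ {K : Finset ℕ | K.card = p + q}, c K ^ 2) = ∑ K ∈ S, c K ^ 2 := by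
    apply finsum_mem_eq_sum_of_inter_support_eq
    ext K
    simp only [Set.mem_inter_iff, Set.mem_setOf_eq, Function.mem_support, Finset.coe_filter,
      Set.mem_setOf_eq, hS, Finset.mem_filter, Finset.mem_coe]
    constructor
    · rintro ⟨hcard, hne⟩
      refine ⟨⟨?_, hcard⟩, hne⟩
      have : c K ≠ 0 := fun h => hne (by rw [hc] at h ⊢; rw [h]; ring)
      obtain ⟨I, hI, hIne⟩ := Finset.exists_ne_zero_of_sum_ne_zero this
      rw [Finset.mem_powersetCard] at hI
      have haI : a I ≠ 0 := fun h => hIne (by rw [h]; ring)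
      have hbJ : b (K \ I) ≠ 0 := fun h => hIne (by rw [h]; ring)
      refine Finset.mem_image.mpr ⟨(I, K \ I), ?_, ?_⟩
      · exact Finset.mem_product.mpr ⟨ha.mem_toFinset.mpr haI, hb.mem_toFinset.mpr hbJ⟩
      · exact Finset.union_sdiff_of_subset hI.1
    · rintro ⟨⟨_, hcard⟩, hne⟩
      exact ⟨hcard, hne⟩
  have hRa : (∑ᶠ I : Finset ℕ, a I ^ 2) = ∑ I ∈ A, a I ^ 2 := by
    apply finsum_eq_sum_of_support_subset
    intro I hI
    simp only [Function.mem_support] at hI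
    exact ha.mem_toFinset.mpr (fun h => hI (by rw [h]; ring))
  have hRb : (∑ᶠ J : Finset ℕ, b J ^ 2) = ∑ J ∈ B, b J ^ 2 := by
    apply finsum_eq_sum_of_support_subset
    intro J hJ
    simp only [Function.mem_support] at hJ
    exact hb.mem_toFinset.mpr (fun h => hJ (by rw [h]; ring))
  rw [hLHS, hRa, hRb, hCval]
  -- step 1: Cauchy-Schwarz per K
  have step1 : ∀ K ∈ S, c K ^ 2 ≤
      C * ∑ I ∈ Finset.powersetCard p K, (a I * b (K \ I)) ^ 2 := by
    intro K hK
    have hKcard : K.card = p + q := (Finset.mem_filter.mp hK).2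
    have := Finset.sum_mul_sq_le_sq_mul_sq (Finset.powersetCard p K)
      (fun I => ε I (K \ I)) (fun I => a I * b (K \ I))
    calc c K ^ 2 = (∑ I ∈ Finset.powersetCard p K,
          ε I (K \ I) * (a I * b (K \ I))) ^ 2 := by
          rw [hc]; congr 1; apply Finset.sum_congr rfl; intros; ring
      _ ≤ (∑ I ∈ Finset.powersetCard p K, ε I (K \ I) ^ 2) *
          ∑ I ∈ Finset.powersetCard p K, (a I * b (K \ I)) ^ 2 := this
      _ ≤ C * ∑ I ∈ Finset.powersetCard p K, (a I * b (K \ I)) ^ 2 := by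
          apply mul_le_mul_of_nonneg_right _ (Finset.sum_nonneg fun _ _ => sq_nonneg _)
          calc ∑ I ∈ Finset.powersetCard p K, ε I (K \ I) ^ 2
              ≤ ∑ _I ∈ Finset.powersetCard p K, (1 : ℝ) := by
                apply Finset.sum_le_sum
                intro I _
                have := hε I (K \ I)
                nlinarith [abs_nonneg (ε I (K \ I)), sq_abs (ε I (K \ I))]
            _ = C := by
                rw [Finset.sum_const, nsmul_eq_mul, mul_one,
                  Finset.card_powersetCard, hKcard, hC]
  -- step 2: sum of products bound
  have step2 : ∑ K ∈ S, ∑ I ∈ Finset.powersetCard p K, (a I * b (K \ I)) ^ 2 ≤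
      (∑ I ∈ A, a I ^ 2) * ∑ J ∈ B, b J ^ 2 := by
    rw [Finset.sum_mul_sum]
    rw [← Finset.sum_product']
    rw [Finset.sum_sigma' S (fun K => Finset.powersetCard p K) (fun K I => (a I * b (K \ I)) ^ 2)]
    set T := S.sigma (fun K => Finset.powersetCard p K) with hT
    set e : (Σ _K : Finset ℕ, Finset ℕ) → Finset ℕ × Finset ℕ :=
      fun t => (t.2, t.1 \ t.2) with he
    set g : Finset ℕ × Finset ℕ → ℝ := fun u => a u.1 ^ 2 * b u.2 ^ 2 with hg
    have hinj : Set.InjOn e T := by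
      rintro ⟨K, I⟩ hKI ⟨K', I'⟩ hKI' heq
      rw [Finset.mem_coe, hT] at hKI hKI'
      rw [Finset.mem_sigma, Finset.mem_powersetCard] at hKI hKI'
      simp only [he, Prod.mk.injEq] at heq
      obtain ⟨h1, h2⟩ := heq
      simp only at hKI hKI'
      subst h1
      have : K = K' := by
        rw [← Finset.union_sdiff_of_subset hKI.2.1, h2,
          Finset.union_sdiff_of_subset hKI'.2.1]
      subst this; rfl
    have hsum : ∑ t ∈ T, (a t.2 * b (t.1 \ t.2)) ^ 2 = ∑ u ∈ T.image e, g u := by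
      rw [Finset.sum_image (fun x hx y hy h => hinj hx hy h)]
      apply Finset.sum_congr rfl
      rintro ⟨K, I⟩ _
      simp only [he, hg]
      ring
    rw [hsum]
    have hzero : ∑ u ∈ T.image e, g u = ∑ u ∈ (T.image e) ∩ (A ×ˢ B), g u := by
      symm
      apply Finset.sum_subset (Finset.inter_subset_left)
      intro u hu hnu
      have : u ∉ A ×ˢ B := fun h => hnu (Finset.mem_inter.mpr ⟨hu, h⟩)
      rw [Finset.mem_product, not_and_or] at this
      rcases this with h | h
      · have : a u.1 = 0 := by
          by_contra hne; exact h (ha.mem_toFinset.mpr hne)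
        simp [hg, this]
      · have : b u.2 = 0 := by
          by_contra hne; exact h (hb.mem_toFinset.mpr hne)
        simp [hg, this]
    rw [hzero]
    apply Finset.sum_le_sum_of_subset_of_nonneg (Finset.inter_subset_right)
    intro u _ _
    exact mul_nonneg (sq_nonneg _) (sq_nonneg _)
  calc ∑ K ∈ S, c K ^ 2
      ≤ ∑ K ∈ S, C * ∑ I ∈ Finset.powersetCard p K, (a I * b (K \ I)) ^ 2 :=
        Finset.sum_le_sum step1
    _ = C * ∑ K ∈ S, ∑ I ∈ Finset.powersetCard p K, (a I * b (K \ I)) ^ 2 := by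
        rw [Finset.mul_sum]
    _ ≤ C * ((∑ I ∈ A, a I ^ 2) * ∑ J ∈ B, b J ^ 2) := by
        apply mul_le_mul_of_nonneg_left step2 (by positivity)
    _ ≤ C ^ 2 * (∑ I ∈ A, a I ^ 2) * ∑ J ∈ B, b J ^ 2 := by
        have h1 : (0 : ℝ) ≤ ∑ I ∈ A, a I ^ 2 := Finset.sum_nonneg fun _ _ => sq_nonneg _
        have h2 : (0 : ℝ) ≤ ∑ J ∈ B, b J ^ 2 := Finset.sum_nonneg fun _ _ => sq_nonneg _
        have : C ≤ C ^ 2 := by nlinarith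
        nlinarith [mul_nonneg h1 h2]
end
end

section
/- Let n ≥ 1 and let f : ℝ^n → ℝ be a smooth function with compact support. Define Γ_r(f)(x) := ((n+2)/(ν_n r^{n+2})) ∫_{B(x,r)} (f(x) − f(y))² dy for r > 0. Then for every x ∈ ℝ^n, lim_{r→0⁺} Γ_r(f)(x) = ‖∇f(x)‖², the squared Euclidean norm of the gradient of f at x. -/
open MeasureTheory Filter Metric Asymptotics
open scoped RealInnerProductSpace

noncomputable section

/-- The non-local energy density
`Γ_r(f)(x) := ((n+2)/(ν_n r^{n+2})) ∫_{B(x,r)} (f(x) − f(y))² dy`,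
where `ν_n` is the Lebesgue volume of the unit ball in `ℝ^n`. -/
def gammaR (n : ℕ) (f : EuclideanSpace ℝ (Fin n) → ℝ) (r : ℝ)
    (x : EuclideanSpace ℝ (Fin n)) : ℝ :=
  (((n : ℝ) + 2) /
      ((volume (Metric.ball (0 : EuclideanSpace ℝ (Fin n)) 1)).toReal * r ^ (n + 2))) *
    ∫ y in Metric.ball x r, (f x - f y) ^ 2

variable {n : ℕ}

abbrev EE (n : ℕ) := EuclideanSpace ℝ (Fin n)

lemma contIntOn {g : EE n → ℝ} (hg : Continuous g) (x : EE n) (r : ℝ) :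
    IntegrableOn g (ball x r) volume :=
  (hg.continuousOn.integrableOn_compact (isCompact_closedBall x r)).mono_set
    ball_subset_closedBall

lemma integral_normsq_ball (hn : 1 ≤ n) {r : ℝ} (hr : 0 < r) :
    ∫ z in ball (0 : EE n) r, ‖z‖ ^ 2
      = (volume (ball (0 : EE n) 1)).toReal * ((n : ℝ) * r ^ (n + 2) / ((n : ℝ) + 2)) := by
  haveI : Nontrivial (EE n) := by
    refine Module.nontrivial_of_finrank_pos (R := ℝ) (M := EE n) ?_
    rw [finrank_euclideanSpace_fin]; omega
  have hdim : Module.finrank ℝ (EE n) = n := finrank_euclideanSpace_fin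
  set g : ℝ → ℝ := fun y => if y < r then y ^ 2 else 0 with hg
  have h1 : (∫ z in ball (0 : EE n) r, ‖z‖ ^ 2) = ∫ z : EE n, g ‖z‖ := by
    rw [← integral_indicator measurableSet_ball]
    congr 1; ext z
    by_cases h : z ∈ ball (0 : EE n) r
    · rw [Set.indicator_of_mem h]
      simp only [hg, if_pos (mem_ball_zero_iff.1 h)]
    · rw [Set.indicator_of_notMem h]
      simp only [hg, if_neg (fun hc => h (mem_ball_zero_iff.2 hc))]
  rw [h1, integral_fun_norm_addHaar volume g, hdim]
  have h2 : (∫ y in Set.Ioi (0:ℝ), y ^ (n - 1) • g y)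
      = ∫ y in Set.Ioo (0:ℝ) r, y ^ (n + 1) := by
    rw [show (fun y : ℝ => y ^ (n-1) • g y)
        = fun y : ℝ => (Set.Iio r).indicator (fun y => y ^ (n-1) * y ^ 2) y by
      ext y; by_cases h : y < r <;>
        simp [hg, h, smul_eq_mul]]
    rw [setIntegral_indicator measurableSet_Iio, Set.Ioi_inter_Iio]
    refine setIntegral_congr_fun measurableSet_Ioo (fun y hy => ?_)
    rw [← pow_add]
    congr 1
    omega
  have h3 : (∫ y in Set.Ioo (0:ℝ) r, y ^ (n + 1)) = r ^ (n + 2) / ((n : ℝ) + 2) := by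
    rw [← integral_Ioc_eq_integral_Ioo, ← intervalIntegral.integral_of_le hr.le,
      integral_pow]
    push_cast
    ring
  rw [h2, h3, nsmul_eq_mul, smul_eq_mul]
  simp only [measureReal_def]
  ring

lemma integral_inner_single_sq (hn : 1 ≤ n) (u : EE n) (hu : ‖u‖ = 1) (r : ℝ) :
    ∫ z in ball (0 : EE n) r, (⟪u, z⟫ : ℝ) ^ 2
      = ∫ z in ball (0 : EE n) r,
          (⟪EuclideanSpace.single (⟨0, hn⟩ : Fin n) (1:ℝ), z⟫ : ℝ) ^ 2 := by
  set u₀ : EE n := EuclideanSpace.single (⟨0, hn⟩ : Fin n) (1:ℝ) with hu0def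
  have hu₀ : ‖u₀‖ = ‖u‖ := by
    rw [hu, hu0def, EuclideanSpace.norm_single]; norm_num
  set T : EE n ≃ₗᵢ[ℝ] EE n := Submodule.reflection (ℝ ∙ (u₀ - u))ᗮ with hT
  have hTu : T u₀ = u := Submodule.reflection_sub hu₀
  have hpre : T ⁻¹' ball (0 : EE n) r = ball 0 r := by
    rw [T.preimage_ball, map_zero]
  have h := (T.measurePreserving).setIntegral_preimage_emb
    (T.toHomeomorph.measurableEmbedding) (fun z => (⟪u, z⟫ : ℝ) ^ 2) (ball 0 r)
  rw [hpre] at h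
  rw [← h]
  refine setIntegral_congr_fun measurableSet_ball (fun z hz => ?_)
  rw [← hTu, T.inner_map_map]

lemma M_val (hn : 1 ≤ n) {r : ℝ} (hr : 0 < r) :
    ∫ z in ball (0 : EE n) r,
        (⟪EuclideanSpace.single (⟨0, hn⟩ : Fin n) (1:ℝ), z⟫ : ℝ) ^ 2
      = (volume (ball (0 : EE n) 1)).toReal * r ^ (n + 2) / ((n : ℝ) + 2) := by
  set M := ∫ z in ball (0 : EE n) r,
    (⟪EuclideanSpace.single (⟨0, hn⟩ : Fin n) (1:ℝ), z⟫ : ℝ) ^ 2 with hM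
  have key : ∀ i : Fin n, (∫ z in ball (0 : EE n) r, (z i) ^ 2) = M := by
    intro i
    have h := integral_inner_single_sq hn (EuclideanSpace.single i (1:ℝ))
      (by rw [EuclideanSpace.norm_single]; norm_num) r
    rw [hM]
    rw [← h]
    refine setIntegral_congr_fun measurableSet_ball (fun z hz => ?_)
    simp [EuclideanSpace.inner_single_left]
  have hsum : (∫ z in ball (0 : EE n) r, ‖z‖ ^ 2) = (n : ℝ) * M := by
    have hnorm : ∀ z : EE n, ‖z‖ ^ 2 = ∑ i : Fin n, (z i) ^ 2 := by
      intro z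
      rw [EuclideanSpace.norm_eq, Real.sq_sqrt (by positivity)]
      exact Finset.sum_congr rfl fun i _ => by rw [Real.norm_eq_abs, sq_abs]
    calc (∫ z in ball (0 : EE n) r, ‖z‖ ^ 2)
        = ∫ z in ball (0 : EE n) r, ∑ i : Fin n, (z i) ^ 2 := by
          exact setIntegral_congr_fun measurableSet_ball fun z _ => hnorm z
      _ = ∑ i : Fin n, ∫ z in ball (0 : EE n) r, (z i) ^ 2 := by
          refine integral_finset_sum _ (fun i _ => ?_)
          exact contIntOn ((EuclideanSpace.proj i).continuous.pow 2) 0 r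
      _ = (n : ℝ) * M := by
          rw [Finset.sum_congr rfl fun i _ => key i]
          simp [mul_comm]
  have hA := integral_normsq_ball hn hr
  rw [hsum] at hA
  have hn' : (n : ℝ) ≠ 0 := by positivity
  refine mul_left_cancel₀ hn' ?_
  rw [hA]
  ring

lemma integral_inner_sq (hn : 1 ≤ n) (v : EE n) {r : ℝ} (hr : 0 < r) :
    ∫ z in ball (0 : EE n) r, (⟪v, z⟫ : ℝ) ^ 2
      = ‖v‖ ^ 2 * ((volume (ball (0 : EE n) 1)).toReal * r ^ (n + 2) / ((n : ℝ) + 2)) := by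
  rcases eq_or_ne v 0 with h | h
  · simp [h]
  · set u : EE n := ‖v‖⁻¹ • v with hudef
    have hv : ‖v‖ ≠ 0 := norm_ne_zero_iff.2 h
    have hu : ‖u‖ = 1 := by
      rw [hudef, norm_smul, norm_inv, norm_norm, inv_mul_cancel₀ hv]
    have h1 : ∀ z : EE n, (⟪v, z⟫ : ℝ) = ‖v‖ * ⟪u, z⟫ := by
      intro z
      rw [hudef, real_inner_smul_left]
      field_simp
    calc ∫ z in ball (0 : EE n) r, (⟪v, z⟫ : ℝ) ^ 2
        = ∫ z in ball (0 : EE n) r, ‖v‖ ^ 2 * (⟪u, z⟫ : ℝ) ^ 2 := by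
          refine setIntegral_congr_fun measurableSet_ball (fun z _ => ?_)
          rw [h1 z]; ring
      _ = ‖v‖ ^ 2 * ∫ z in ball (0 : EE n) r, (⟪u, z⟫ : ℝ) ^ 2 := integral_const_mul _ _
      _ = _ := by rw [integral_inner_single_sq hn u hu r, M_val hn hr]

/-- For a smooth compactly supported `f : ℝ^n → ℝ` and every `x`,
`lim_{r→0⁺} Γ_r(f)(x) = ‖∇f(x)‖²`. -/
theorem gammaR_tendsto_gradient_sq (n : ℕ) (hn : 1 ≤ n)
    (f : EuclideanSpace ℝ (Fin n) → ℝ) (hf : ContDiff ℝ (⊤ : ℕ∞) f)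
    (hsupp : HasCompactSupport f) (x : EuclideanSpace ℝ (Fin n)) :
    Tendsto (fun r : ℝ => gammaR n f r x) (nhdsWithin 0 (Set.Ioi 0))
      (nhds (‖gradient f x‖ ^ 2)) := by
  haveI : Nontrivial (EE n) :=
    Module.nontrivial_of_finrank_pos (R := ℝ) (M := EE n)
      (by rw [finrank_euclideanSpace_fin]; omega)
  set v := gradient f x with hv
  set ν := (volume (ball (0 : EE n) 1)).toReal with hν
  have hν0 : 0 < ν :=
    ENNReal.toReal_pos (measure_ball_pos volume 0 one_pos).ne' measure_ball_lt_top.ne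
  have hgrad : HasGradientAt f v x := ((hf.differentiable (by simp)) x).hasGradientAt
  have hlo := hasGradientAt_iff_isLittleO.1 hgrad
  rw [Metric.tendsto_nhdsWithin_nhds]
  intro ε' hε'
  set C := ((n : ℝ) + 2) * (2 * ‖v‖ + 1) with hC
  have hCpos : 0 < C := by positivity
  set ε := min 1 (ε' / (2 * C)) with hε
  have hεpos : 0 < ε := lt_min one_pos (by positivity)
  have hε1 : ε ≤ 1 := min_le_left _ _
  have hsmall := (isLittleO_iff.1 hlo) hεpos
  rw [Metric.eventually_nhds_iff] at hsmall
  obtain ⟨δ, hδ0, hδ⟩ := hsmall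
  refine ⟨δ, hδ0, fun {r} hr hrδ => ?_⟩
  have hr0 : 0 < r := hr
  have hrδ' : r < δ := by
    have := hrδ
    rw [Real.dist_eq, sub_zero, abs_of_pos hr0] at this
    exact this
  have hfc : Continuous f := hf.continuous
  have hint1 : IntegrableOn (fun y => (f x - f y) ^ 2) (ball x r) volume :=
    contIntOn (by fun_prop) x r
  have hint2 : IntegrableOn (fun y => (⟪v, y - x⟫ : ℝ) ^ 2) (ball x r) volume :=
    contIntOn ((continuous_const.inner (continuous_id.sub continuous_const)).pow 2) x r
  have htrans : (∫ y in ball x r, (⟪v, y - x⟫ : ℝ) ^ 2)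
      = ∫ z in ball (0 : EE n) r, (⟪v, z⟫ : ℝ) ^ 2 := by
    have hemb : MeasurableEmbedding (fun z : EE n => z + x) :=
      (MeasurableEquiv.addRight x).measurableEmbedding
    have h := (measurePreserving_add_right (volume : Measure (EE n)) x).setIntegral_preimage_emb
      hemb (fun y => (⟪v, y - x⟫ : ℝ) ^ 2) (ball x r)
    have hpre : (fun z : EE n => z + x) ⁻¹' ball x r = ball 0 r := by
      ext z
      simp [mem_ball, dist_eq_norm]
    rw [hpre] at h
    rw [← h]
    refine setIntegral_congr_fun measurableSet_ball (fun z _ => ?_)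
    simp
  have hkey : (∫ y in ball x r, (⟪v, y - x⟫ : ℝ) ^ 2)
      = ‖v‖ ^ 2 * (ν * r ^ (n + 2) / ((n : ℝ) + 2)) := by
    rw [htrans, integral_inner_sq hn v hr0]
  have hsub : gammaR n f r x - ‖v‖ ^ 2
      = (((n : ℝ) + 2) / (ν * r ^ (n + 2)))
          * ∫ y in ball x r, ((f x - f y) ^ 2 - (⟪v, y - x⟫ : ℝ) ^ 2) := by
    rw [integral_sub hint1 hint2, gammaR, hkey]
    rw [← hν]
    have hne : ν * r ^ (n + 2) ≠ 0 := by positivity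
    field_simp
  have hbound : ∀ y ∈ ball x r,
      |(f x - f y) ^ 2 - (⟪v, y - x⟫ : ℝ) ^ 2| ≤ ε * (2 * ‖v‖ + 1) * r ^ 2 := by
    intro y hy
    have hyx : ‖y - x‖ < r := by rwa [mem_ball, dist_eq_norm] at hy
    have hyx0 : 0 ≤ ‖y - x‖ := norm_nonneg _
    have he := hδ (show dist y x < δ by
      rw [dist_eq_norm]; exact hyx.trans hrδ')
    set a := (⟪v, y - x⟫ : ℝ) with ha'
    set e := f y - f x - a with hedef
    have ha : |a| ≤ ‖v‖ * ‖y - x‖ := abs_real_inner_le_norm v (y - x)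
    have he' : |e| ≤ ε * ‖y - x‖ := by simpa [Real.norm_eq_abs] using he
    have hid : (f x - f y) ^ 2 - a ^ 2 = e * (2 * a + e) := by
      rw [hedef]; ring
    rw [hid, abs_mul]
    have h2ae : |2 * a + e| ≤ 2 * (‖v‖ * ‖y - x‖) + ε * ‖y - x‖ := by
      calc |2 * a + e| ≤ |2 * a| + |e| := abs_add_le _ _
        _ ≤ 2 * (‖v‖ * ‖y - x‖) + ε * ‖y - x‖ := by
            rw [abs_mul, abs_two]
            gcongr
    calc |e| * |2 * a + e|
        ≤ (ε * ‖y - x‖) * (2 * (‖v‖ * ‖y - x‖) + ε * ‖y - x‖) := by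
          refine mul_le_mul he' h2ae (abs_nonneg _) (by positivity)
      _ = ε * (2 * ‖v‖ + ε) * ‖y - x‖ ^ 2 := by ring
      _ ≤ ε * (2 * ‖v‖ + 1) * ‖y - x‖ ^ 2 := by gcongr
      _ ≤ ε * (2 * ‖v‖ + 1) * r ^ 2 := by gcongr
  have hvol : (volume (ball x r)).toReal = r ^ n * ν := by
    rw [(volume : Measure (EE n)).addHaar_ball x hr0.le, ENNReal.toReal_mul,
      ENNReal.toReal_ofReal (by positivity), finrank_euclideanSpace_fin]
  have hibound : |∫ y in ball x r, ((f x - f y) ^ 2 - (⟪v, y - x⟫ : ℝ) ^ 2)|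
      ≤ ε * (2 * ‖v‖ + 1) * r ^ 2 * (r ^ n * ν) := by
    rw [← hvol]
    have := norm_setIntegral_le_of_norm_le_const (μ := volume) (s := ball x r)
      (C := ε * (2 * ‖v‖ + 1) * r ^ 2) measure_ball_lt_top
      (fun y hy => by rw [Real.norm_eq_abs]; exact hbound y hy)
    rw [Real.norm_eq_abs] at this
    exact this
  rw [Real.dist_eq, hsub]
  have hcpos : 0 < ((n : ℝ) + 2) / (ν * r ^ (n + 2)) := by positivity
  rw [abs_mul, abs_of_pos hcpos]
  calc (((n : ℝ) + 2) / (ν * r ^ (n + 2)))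
        * |∫ y in ball x r, ((f x - f y) ^ 2 - (⟪v, y - x⟫ : ℝ) ^ 2)|
      ≤ (((n : ℝ) + 2) / (ν * r ^ (n + 2))) * (ε * (2 * ‖v‖ + 1) * r ^ 2 * (r ^ n * ν)) := by
        gcongr
    _ = C * ε := by
        have hne : ν ≠ 0 := hν0.ne'
        have hrne : r ≠ 0 := hr0.ne'
        rw [hC]
        field_simp
        ring
    _ ≤ C * (ε' / (2 * C)) := by
        have := min_le_right (1 : ℝ) (ε' / (2 * C))
        gcongr
    _ < ε' := by
        rw [mul_div_assoc']
        rw [div_lt_iff₀ (by positivity)]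
        nlinarith
end
end

section
/- Let n ≥ 1 and let f : ℝ^n → ℝ be a smooth function with compact support. Define Γ_r(f)(x) := ((n+2)/(ν_n r^{n+2})) ∫_{B(x,r)} (f(x) − f(y))² dy for r > 0. Then lim_{r→0⁺} ∫_{ℝ^n} | Γ_r(f)(x) − ‖∇f(x)‖² | dx = 0; that is, Γ_r(f) converges to ‖∇f‖² in L¹(ℝ^n) as r → 0⁺. -/
open MeasureTheory Filter

noncomputable section

open Metric

variable {n : ℕ}

local notation "E" n => EuclideanSpace ℝ (Fin n)

lemma radial (n : ℕ) (hn : 1 ≤ n) {r : ℝ} (hr : 0 < r) :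
    ∫ y in Metric.ball (0 : EuclideanSpace ℝ (Fin n)) r, ‖y‖ ^ 2 =
      (n : ℝ) * (volume (Metric.ball (0 : EuclideanSpace ℝ (Fin n)) 1)).toReal * r ^ (n + 2) /
        ((n : ℝ) + 2) := by
  haveI : Nonempty (Fin n) := ⟨⟨0, hn⟩⟩
  haveI : Nontrivial (EuclideanSpace ℝ (Fin n)) := by
    refine ⟨EuclideanSpace.single ⟨0, hn⟩ 1, 0, ?_⟩
    intro h
    have := congrArg (fun v : EuclideanSpace ℝ (Fin n) => v ⟨0, hn⟩) h
    simp at this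
  have hdim : Module.finrank ℝ (EuclideanSpace ℝ (Fin n)) = n := finrank_euclideanSpace_fin
  have key := integral_fun_norm_addHaar (volume : Measure (EuclideanSpace ℝ (Fin n)))
    (fun t : ℝ => t ^ 2 * Set.indicator (Set.Iio r) 1 t)
  rw [hdim] at key
  have hL : (∫ x : EuclideanSpace ℝ (Fin n),
      ‖x‖ ^ 2 * Set.indicator (Set.Iio r) 1 ‖x‖) =
      ∫ y in Metric.ball (0 : EuclideanSpace ℝ (Fin n)) r, ‖y‖ ^ 2 := by
    rw [← integral_indicator measurableSet_ball]
    congr 1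
    ext x
    by_cases hx : x ∈ Metric.ball (0 : EuclideanSpace ℝ (Fin n)) r
    · have : ‖x‖ < r := by simpa [mem_ball_zero_iff] using hx
      simp [Set.indicator_of_mem hx, Set.indicator_of_mem (Set.mem_Iio.2 this)]
    · have : ¬ ‖x‖ < r := by simpa [mem_ball_zero_iff] using hx
      simp [Set.indicator_of_notMem hx, Set.indicator_of_notMem (by simpa using this : ‖x‖ ∉ Set.Iio r)]
  have hR : (∫ y in Set.Ioi (0:ℝ), y ^ (n - 1) • (y ^ 2 * Set.indicator (Set.Iio r) 1 y)) =
      r ^ (n + 2) / ((n : ℝ) + 2) := by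
    have h1 : ∀ y ∈ Set.Ioi (0:ℝ),
        y ^ (n - 1) • (y ^ 2 * Set.indicator (Set.Iio r) 1 y) =
        Set.indicator (Set.Iio r) (fun y => y ^ (n + 1)) y := by
      intro y _
      by_cases hy : y ∈ Set.Iio r
      · rw [Set.indicator_of_mem hy, Set.indicator_of_mem hy]
        simp only [smul_eq_mul, Pi.one_apply, mul_one]
        rw [← pow_add]
        congr 1
        omega
      · simp [Set.indicator_of_notMem hy]
    rw [setIntegral_congr_fun measurableSet_Ioi h1, setIntegral_indicator measurableSet_Iio]
    have : Set.Ioi (0:ℝ) ∩ Set.Iio r = Set.Ioo 0 r := Set.Ioi_inter_Iio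
    rw [this, ← integral_Ioc_eq_integral_Ioo, ← intervalIntegral.integral_of_le hr.le,
      integral_pow]
    push_cast
    ring
  rw [hL, hR] at key
  rw [key]
  simp only [nsmul_eq_mul, smul_eq_mul, measureReal_def]
  ring

lemma isoSetIntegral (e : (E n) ≃ₗᵢ[ℝ] (E n)) (g : (E n) → ℝ) (r : ℝ) :
    ∫ y in Metric.ball (0 : E n) r, g (e y) = ∫ y in Metric.ball (0 : E n) r, g y := by
  have h := e.measurePreserving.setIntegral_preimage_emb
    e.toHomeomorph.measurableEmbedding g (Metric.ball (0 : E n) r)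
  have hpre : e ⁻¹' Metric.ball (0 : E n) r = Metric.ball (0 : E n) r := by
    ext z
    simp [mem_ball_zero_iff, e.norm_map]
  rwa [hpre] at h

lemma contIntegrableOn (g : (E n) → ℝ) (hg : Continuous g) (x : E n) (r : ℝ) :
    IntegrableOn g (Metric.ball x r) volume := by
  exact ((hg.continuousOn.integrableOn_compact (isCompact_closedBall x r))).mono_set
    ball_subset_closedBall

lemma cross_zero (r : ℝ) {i j : Fin n} (hij : i ≠ j) :
    ∫ y in Metric.ball (0 : E n) r, y i * y j = 0 := by
  classical
  set e : (E n) ≃ₗᵢ[ℝ] (E n) :=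
    LinearIsometryEquiv.piLpCongrRight 2
      (fun k => if k = i then LinearIsometryEquiv.neg ℝ else LinearIsometryEquiv.refl ℝ ℝ) with he
  have h := isoSetIntegral e (fun y => y i * y j) r
  have happ : ∀ (y : E n), (e y) i * (e y) j = -(y i * y j) := by
    intro y
    have hi : (e y) i = -(y i) := by simp [he]
    have hj : (e y) j = y j := by simp [he, (Ne.symm hij)]
    rw [hi, hj]; ring
  simp only [happ] at h
  rw [integral_neg] at h
  linarith

lemma coord_sq_eq (r : ℝ) (i j : Fin n) :
    ∫ y in Metric.ball (0 : E n) r, (y i) ^ 2 = ∫ y in Metric.ball (0 : E n) r, (y j) ^ 2 := by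
  classical
  set e : (E n) ≃ₗᵢ[ℝ] (E n) :=
    LinearIsometryEquiv.piLpCongrLeft 2 ℝ ℝ (Equiv.swap i j) with he
  have h := isoSetIntegral e (fun y => (y i) ^ 2) r
  have happ : ∀ (y : E n), (e y) i = y j := by
    intro y
    simp only [he, LinearIsometryEquiv.piLpCongrLeft_apply, Equiv.piCongrLeft'_apply]
    rw [Equiv.symm_swap, Equiv.swap_apply_left]
  simp only [happ] at h
  exact h.symm

lemma continuous_coord (i : Fin n) : Continuous fun y : E n => y i := by
  exact (continuous_apply i).comp (PiLp.continuous_ofLp 2 _)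

lemma moment (hn : 1 ≤ n) {r : ℝ} (hr : 0 < r) (v : E n) :
    ∫ y in Metric.ball (0 : E n) r, (inner ℝ v y : ℝ) ^ 2 =
      ‖v‖ ^ 2 * ((volume (Metric.ball (0 : E n) 1)).toReal * r ^ (n + 2)) / ((n : ℝ) + 2) := by
  classical
  have hint : ∀ i j : Fin n, IntegrableOn
      (fun y : E n => v i * v j * (y i * y j)) (Metric.ball (0 : E n) r) volume := by
    intro i j
    exact contIntegrableOn _ (continuous_const.mul ((continuous_coord i).mul (continuous_coord j))) 0 r
  have hexp : ∀ y : E n, (inner ℝ v y : ℝ) ^ 2 =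
      ∑ i : Fin n, ∑ j : Fin n, v i * v j * (y i * y j) := by
    intro y
    have : (inner ℝ v y : ℝ) = ∑ i : Fin n, v i * y i := by
      simp [PiLp.inner_apply, RCLike.inner_apply, conj_trivial, mul_comm]
    rw [this, sq, Finset.sum_mul_sum]
    congr 1; ext i; congr 1; ext j; ring
  rw [setIntegral_congr_fun measurableSet_ball (fun y _ => hexp y)]
  rw [integral_finset_sum _ (fun i _ => integrable_finset_sum _ (fun j _ => hint i j))]
  have hIJ : ∀ i : Fin n, (∫ y in Metric.ball (0 : E n) r,
      ∑ j : Fin n, v i * v j * (y i * y j)) = (v i) ^ 2 *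
        ∫ y in Metric.ball (0 : E n) r, (y ⟨0, hn⟩) ^ 2 := by
    intro i
    rw [integral_finset_sum _ (fun j _ => hint i j)]
    have hterm : ∀ j : Fin n, (∫ y in Metric.ball (0 : E n) r, v i * v j * (y i * y j)) =
        if j = i then (v i) ^ 2 * ∫ y in Metric.ball (0 : E n) r, (y ⟨0, hn⟩) ^ 2 else 0 := by
      intro j
      rw [integral_const_mul]
      by_cases hij : j = i
      · subst hij
        rw [if_pos rfl]
        have h2 : (∫ y in Metric.ball (0 : E n) r, y j * y j) =
            ∫ y in Metric.ball (0 : E n) r, (y j) ^ 2 := by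
          apply setIntegral_congr_fun measurableSet_ball
          intro y _; simp [sq]
        rw [h2, coord_sq_eq r j ⟨0, hn⟩, sq]
      · rw [cross_zero r (Ne.symm hij), mul_zero]
        simp [hij]
    rw [Finset.sum_congr rfl (fun j _ => hterm j)]
    simp
  rw [Finset.sum_congr rfl (fun i _ => hIJ i), ← Finset.sum_mul]
  have hnorm : (∑ i : Fin n, (v i) ^ 2) = ‖v‖ ^ 2 := by
    rw [← real_inner_self_eq_norm_sq]
    simp only [PiLp.inner_apply, RCLike.inner_apply, conj_trivial, sq, mul_comm]
  rw [hnorm]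
  -- now compute the coordinate integral
  have hsum : (n : ℝ) * (∫ y in Metric.ball (0 : E n) r, (y ⟨0, hn⟩) ^ 2) =
      ∫ y in Metric.ball (0 : E n) r, ‖y‖ ^ 2 := by
    have h1 : ∀ y : E n, ‖y‖ ^ 2 = ∑ i : Fin n, (y i) ^ 2 := by
      intro y
      rw [← real_inner_self_eq_norm_sq]
      simp only [PiLp.inner_apply, RCLike.inner_apply, conj_trivial, sq, mul_comm]
    rw [setIntegral_congr_fun measurableSet_ball (fun y _ => h1 y),
      integral_finset_sum _ (μ := volume.restrict (Metric.ball (0 : E n) r)) (f := fun i (y : E n) => (y i) ^ 2) (fun i _ => contIntegrableOn (fun y : E n => (y i) ^ 2) ((continuous_coord i).pow 2) 0 r)]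
    rw [Finset.sum_congr rfl (fun i _ => coord_sq_eq r i ⟨0, hn⟩)]
    simp [Finset.sum_const, mul_comm]
  have hn0 : (n : ℝ) ≠ 0 := by positivity
  have := radial n hn hr
  rw [← hsum] at this
  have hI : (∫ y in Metric.ball (0 : E n) r, (y ⟨0, hn⟩) ^ 2) =
      (volume (Metric.ball (0 : E n) 1)).toReal * r ^ (n + 2) / ((n : ℝ) + 2) := by
    have hpos : ((n : ℝ) + 2) ≠ 0 := by positivity
    field_simp at this ⊢
    exact mul_left_cancel₀ hn0 (by rw [this])
  rw [hI]
  ring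


lemma transl (x : E n) (r : ℝ) (g : (E n) → ℝ) :
    ∫ y in Metric.ball x r, g y = ∫ z in Metric.ball (0 : E n) r, g (x + z) := by
  have h := (measurePreserving_add_left (volume : Measure (E n)) x).setIntegral_preimage_emb
    (Homeomorph.addLeft x).measurableEmbedding g (Metric.ball x r)
  have hpre : (fun z : E n => x + z) ⁻¹' Metric.ball x r = Metric.ball (0 : E n) r := by
    ext z
    simp [Metric.mem_ball, dist_eq_norm, add_sub_cancel_left]
  rw [← hpre]
  exact h.symm

set_option maxHeartbeats 1000000 in
lemma gamma_est (hn : 1 ≤ n) (f : (E n) → ℝ) (hf : ContDiff ℝ (⊤ : ℕ∞) f)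
    {L M : NNReal} (hL : LipschitzWith L f) (hM : LipschitzWith M (fderiv ℝ f))
    {r : ℝ} (hr : 0 < r) (hr1 : r ≤ 1) (x : E n) :
    |gammaR n f r x - ‖gradient f x‖ ^ 2| ≤
      (((n : ℝ) + 2) * ((M : ℝ) ^ 2 + 2 * (M : ℝ) * (L : ℝ))) * r := by
  haveI : Nonempty (Fin n) := ⟨⟨0, hn⟩⟩
  haveI : Nontrivial (EuclideanSpace ℝ (Fin n)) := by
    refine ⟨EuclideanSpace.single ⟨0, hn⟩ 1, 0, ?_⟩
    intro h
    have := congrArg (fun v : EuclideanSpace ℝ (Fin n) => v ⟨0, hn⟩) h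
    simp at this
  set ν : ℝ := (volume (Metric.ball (0 : E n) 1)).toReal with hν
  have hνpos : 0 < ν := ENNReal.toReal_pos (measure_ball_pos volume 0 one_pos).ne'
    measure_ball_lt_top.ne
  set φ : (E n) →L[ℝ] ℝ := fderiv ℝ f x with hφdef
  set D : ℝ := (M : ℝ) ^ 2 + 2 * (M : ℝ) * (L : ℝ) with hD
  have hDpos : 0 ≤ D := by positivity
  -- the quadratic model integral
  have hI2 : (∫ y in Metric.ball x r, (φ (x - y)) ^ 2) =
      ‖gradient f x‖ ^ 2 * (ν * r ^ (n + 2)) / ((n : ℝ) + 2) := by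
    rw [transl x r (fun y => (φ (x - y)) ^ 2)]
    have hcongr : ∀ z : E n, (φ (x - (x + z))) ^ 2 = (inner ℝ (gradient f x) z : ℝ) ^ 2 := by
      intro z
      have h1 : (inner ℝ (gradient f x) z : ℝ) = φ z := by
        rw [gradient]
        exact InnerProductSpace.toDual_symm_apply
      have h2 : x - (x + z) = -z := by abel
      rw [h1, h2, map_neg, neg_sq]
    simp only [hcongr]
    exact moment hn hr (gradient f x)
  -- pointwise bound on the integrand difference
  have key : ∀ y ∈ Metric.ball x r,
      |(f x - f y) ^ 2 - (φ (x - y)) ^ 2| ≤ D * r ^ 3 := by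
    intro y hy
    have hyx : ‖y - x‖ ≤ r := by
      have := mem_ball_iff_norm.1 hy
      linarith
    have hu : |f y - f x - φ (y - x)| ≤ (M : ℝ) * r * ‖y - x‖ := by
      have hbound : ∀ z ∈ Metric.ball x r, ‖fderiv ℝ f z - φ‖ ≤ (M : ℝ) * r := by
        intro z hz
        have h1 : dist (fderiv ℝ f z) (fderiv ℝ f x) ≤ (M : ℝ) * dist z x := hM.dist_le_mul z x
        rw [dist_eq_norm] at h1
        refine h1.trans ?_
        have : dist z x ≤ r := le_of_lt (mem_ball.1 hz)
        exact mul_le_mul_of_nonneg_left this M.coe_nonneg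
      have := Convex.norm_image_sub_le_of_norm_fderiv_le'
        (fun z _ => (hf.differentiable (by simp)).differentiableAt)
        hbound (convex_ball x r) (mem_ball_self hr) hy
      simpa [Real.norm_eq_abs] using this
    have hu2 : |f y - f x - φ (y - x)| ≤ (M : ℝ) * r ^ 2 := by
      calc |f y - f x - φ (y - x)| ≤ (M : ℝ) * r * ‖y - x‖ := hu
        _ ≤ (M : ℝ) * r * r := by
            exact mul_le_mul_of_nonneg_left hyx (by positivity)
        _ = (M : ℝ) * r ^ 2 := by ring
    have hw : |φ (y - x)| ≤ (L : ℝ) * r := by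
      have h1 : ‖φ (y - x)‖ ≤ ‖φ‖ * ‖y - x‖ := φ.le_opNorm _
      have h2 : ‖φ‖ ≤ (L : ℝ) := norm_fderiv_le_of_lipschitz ℝ hL
      rw [Real.norm_eq_abs] at h1
      calc |φ (y - x)| ≤ ‖φ‖ * ‖y - x‖ := h1
        _ ≤ (L : ℝ) * r := mul_le_mul h2 hyx (norm_nonneg _) L.coe_nonneg
    set u : ℝ := f y - f x - φ (y - x) with hudef
    set w : ℝ := φ (y - x) with hwdef
    have hid : (f x - f y) ^ 2 - (φ (x - y)) ^ 2 = u ^ 2 + 2 * u * w := by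
      have h1 : f x - f y = -(u + w) := by rw [hudef, hwdef]; ring
      have h2 : φ (x - y) = -w := by
        rw [hwdef, show x - y = -(y - x) by abel, map_neg]
      rw [h1, h2]; ring
    rw [hid]
    have habs : |u ^ 2 + 2 * u * w| ≤ |u| ^ 2 + 2 * |u| * |w| := by
      calc |u ^ 2 + 2 * u * w| ≤ |u ^ 2| + |2 * u * w| := abs_add_le _ _
        _ = |u| ^ 2 + 2 * |u| * |w| := by
            rw [abs_mul, abs_mul, sq_abs]
            simp [abs_of_nonneg, sq]
    refine habs.trans ?_
    have hu0 : (0:ℝ) ≤ |u| := abs_nonneg _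
    have hw0 : (0:ℝ) ≤ |w| := abs_nonneg _
    have hr4 : r ^ 4 ≤ r ^ 3 := by
      have := pow_le_pow_of_le_one hr.le hr1 (show 3 ≤ 4 by norm_num)
      linarith
    have h1 : |u| ^ 2 ≤ ((M : ℝ) * r ^ 2) ^ 2 := pow_le_pow_left₀ hu0 hu2 2
    have h2 : |u| * |w| ≤ ((M : ℝ) * r ^ 2) * ((L : ℝ) * r) :=
      mul_le_mul hu2 hw hw0 (by positivity)
    have h3 : ((M : ℝ) * r ^ 2) ^ 2 = (M : ℝ) ^ 2 * r ^ 4 := by ring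
    have h4 : (M : ℝ) ^ 2 * r ^ 4 ≤ (M : ℝ) ^ 2 * r ^ 3 :=
      mul_le_mul_of_nonneg_left hr4 (by positivity)
    rw [hD]
    have h5 : ((M : ℝ) * r ^ 2) * ((L : ℝ) * r) = (M : ℝ) * (L : ℝ) * r ^ 3 := by ring
    rw [h5] at h2
    linarith
  -- integrability
  have hint1 : IntegrableOn (fun y => (f x - f y) ^ 2) (Metric.ball x r) volume :=
    contIntegrableOn _ (((continuous_const.sub hf.continuous).pow 2)) x r
  have hint2 : IntegrableOn (fun y => (φ (x - y)) ^ 2) (Metric.ball x r) volume :=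
    contIntegrableOn _ ((φ.continuous.comp (continuous_const.sub continuous_id)).pow 2) x r
  have hsub : (∫ y in Metric.ball x r, ((f x - f y) ^ 2 - (φ (x - y)) ^ 2)) =
      (∫ y in Metric.ball x r, (f x - f y) ^ 2) - ∫ y in Metric.ball x r, (φ (x - y)) ^ 2 :=
    integral_sub hint1 hint2
  have hvol : (volume (Metric.ball x r)).toReal = r ^ n * ν := by
    rw [Measure.addHaar_ball volume x hr.le, ENNReal.toReal_mul,
      ENNReal.toReal_ofReal (by positivity)]
    congr 2
    exact finrank_euclideanSpace_fin
  have hbnd : |(∫ y in Metric.ball x r, (f x - f y) ^ 2) -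
      ∫ y in Metric.ball x r, (φ (x - y)) ^ 2| ≤ D * r ^ 3 * (r ^ n * ν) := by
    rw [← hsub, ← hvol]
    have := norm_setIntegral_le_of_norm_le_const_ae' (μ := volume)
      (s := Metric.ball x r) (C := D * r ^ 3)
      measure_ball_lt_top
      (Eventually.of_forall (fun y hy => by
        rw [Real.norm_eq_abs]; exact key y hy))
    rwa [Real.norm_eq_abs, measureReal_def] at this
  -- final algebra
  have hgamma : gammaR n f r x = (((n : ℝ) + 2) / (ν * r ^ (n + 2))) *
      ∫ y in Metric.ball x r, (f x - f y) ^ 2 := rfl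
  have hrpow : (0:ℝ) < r ^ (n + 2) := by positivity
  have hgrad : ‖gradient f x‖ ^ 2 = (((n : ℝ) + 2) / (ν * r ^ (n + 2))) *
      ∫ y in Metric.ball x r, (φ (x - y)) ^ 2 := by
    rw [hI2]
    field_simp
  rw [hgamma, hgrad, ← mul_sub, abs_mul, abs_div]
  have hcpos : |((n : ℝ) + 2)| / |ν * r ^ (n + 2)| = ((n : ℝ) + 2) / (ν * r ^ (n + 2)) := by
    rw [abs_of_pos (by positivity), abs_of_pos (by positivity)]
  rw [hcpos]
  calc (((n : ℝ) + 2) / (ν * r ^ (n + 2))) * |(∫ y in Metric.ball x r, (f x - f y) ^ 2) -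
        ∫ y in Metric.ball x r, (φ (x - y)) ^ 2|
      ≤ (((n : ℝ) + 2) / (ν * r ^ (n + 2))) * (D * r ^ 3 * (r ^ n * ν)) := by
        exact mul_le_mul_of_nonneg_left hbnd (by positivity)
    _ = (((n : ℝ) + 2) * D) * r := by
        field_simp
        ring

lemma zero_outside (f : (E n) → ℝ) (hsupp : HasCompactSupport f)
    {r : ℝ} (hr : 0 < r) (hr1 : r ≤ 1) (x : E n)
    (hx : x ∉ Metric.cthickening 1 (tsupport f)) :
    gammaR n f r x - ‖gradient f x‖ ^ 2 = 0 := by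
  have hfx : f x = 0 := by
    apply image_eq_zero_of_notMem_tsupport
    intro hx'
    exact hx (Metric.self_subset_cthickening _ hx')
  have hball : ∀ y ∈ Metric.ball x r, f y = 0 := by
    intro y hy
    by_contra hfy
    have hy' : y ∈ tsupport f := subset_tsupport f (by simpa using hfy)
    have : x ∈ Metric.thickening 1 (tsupport f) := by
      rw [Metric.mem_thickening_iff]
      exact ⟨y, hy', lt_of_lt_of_le (mem_ball'.1 hy) hr1⟩
    exact hx (Metric.thickening_subset_cthickening _ _ this)
  have hgrad : gradient f x = 0 := by
    have hfd : fderiv ℝ f x = 0 := by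
      apply image_eq_zero_of_notMem_tsupport
      intro hx'
      exact hx (Metric.self_subset_cthickening _ (tsupport_fderiv_subset ℝ hx'))
    rw [gradient, hfd, map_zero]
  have hint : (∫ y in Metric.ball x r, (f x - f y) ^ 2) = 0 := by
    rw [setIntegral_congr_fun measurableSet_ball
      (fun y hy => by simp [hfx, hball y hy] : Set.EqOn (fun y => (f x - f y) ^ 2) 0 _)]
    simp
  rw [gammaR, hint, hgrad]
  simp

/-- For a smooth compactly supported `f : ℝ^n → ℝ`, `Γ_r(f)` converges to `‖∇f‖²` in
`L¹(ℝ^n)` as `r → 0⁺`: `lim_{r→0⁺} ∫ |Γ_r(f)(x) − ‖∇f(x)‖²| dx = 0`. -/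
theorem gammaR_tendsto_gradient_sq_L1 (n : ℕ) (hn : 1 ≤ n)
    (f : EuclideanSpace ℝ (Fin n) → ℝ) (hf : ContDiff ℝ (⊤ : ℕ∞) f)
    (hsupp : HasCompactSupport f) :
    Tendsto (fun r : ℝ => ∫ x, |gammaR n f r x - ‖gradient f x‖ ^ 2|)
      (nhdsWithin 0 (Set.Ioi 0)) (nhds 0) := by
  obtain ⟨L, hL⟩ := ContDiff.lipschitzWith_of_hasCompactSupport hsupp hf (by simp)
  obtain ⟨M, hM⟩ := ContDiff.lipschitzWith_of_hasCompactSupport (hsupp.fderiv ℝ)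
    (hf.fderiv_right (m := (⊤ : ℕ∞)) (by simp)) (by simp)
  set C : ℝ := ((n : ℝ) + 2) * ((M : ℝ) ^ 2 + 2 * (M : ℝ) * (L : ℝ)) with hC
  have hCpos : 0 ≤ C := by positivity
  set K : Set (EuclideanSpace ℝ (Fin n)) := Metric.cthickening 1 (tsupport f) with hK
  have hKcomp : IsCompact K := hsupp.cthickening
  have hKmeas : MeasurableSet K := Metric.isClosed_cthickening.measurableSet
  have hKfin : volume K < ⊤ := hKcomp.measure_lt_top
  set V : ℝ := (volume K).toReal with hV
  have hVpos : 0 ≤ V := ENNReal.toReal_nonneg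
  apply squeeze_zero' (g := fun r => (C * V) * r)
  · filter_upwards with r
    exact integral_nonneg (fun x => abs_nonneg _)
  · filter_upwards [Ioo_mem_nhdsGT_of_mem (Set.mem_Ico.2 ⟨le_rfl, zero_lt_one⟩)] with r hr
    obtain ⟨hr0, hr1⟩ := hr
    have hzero : ∀ x ∉ K, |gammaR n f r x - ‖gradient f x‖ ^ 2| = 0 := by
      intro x hx
      rw [zero_outside f hsupp hr0 hr1.le x hx, abs_zero]
    rw [← setIntegral_eq_integral_of_forall_compl_eq_zero hzero]
    have hb := norm_setIntegral_le_of_norm_le_const_ae' (μ := volume) (s := K)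
      (C := C * r) hKfin
      (Eventually.of_forall (fun x _ => by
        rw [Real.norm_eq_abs, abs_abs]
        exact gamma_est hn f hf hL hM hr0 hr1.le x))
    calc (∫ x in K, |gammaR n f r x - ‖gradient f x‖ ^ 2|)
        ≤ ‖∫ x in K, |gammaR n f r x - ‖gradient f x‖ ^ 2|‖ := le_abs_self _
      _ ≤ (C * r) * V := hb
      _ = (C * V) * r := by ring
  · have h0 : Tendsto (fun r : ℝ => (C * V) * r) (nhds 0) (nhds ((C * V) * 0)) :=
      (tendsto_id (α := ℝ)).const_mul (C * V) |>.comp (tendsto_id) |>.congr (fun r => rfl) |>.mono_left le_rfl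
    have h1 := h0.mono_left (nhdsWithin_le_nhds (s := Set.Ioi (0:ℝ)))
    simpa using h1
end
end

section
/- Let φ : (0,∞) → ℝ be measurable. Suppose there are constants M, C ≥ 0 and L ∈ ℝ such that |φ(t)| ≤ M for all t ∈ (0,1], |φ(t)| ≤ C/t for all t > 1, and lim_{t→0⁺} φ(t) = L. Then for every α ∈ (0,1) the integral ∫_0^∞ φ(t) t^{−α} dt converges absolutely, and lim_{α→1⁻} (α/Γ(1−α)) ∫_0^∞ φ(t) t^{−α} dt = L, where Γ denotes the Euler Gamma function. -/
open MeasureTheory Filter Set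

noncomputable section

private lemma aux_meas (φ : ℝ → ℝ)
    (hφ : AEMeasurable φ (volume.restrict (Set.Ioi (0 : ℝ)))) (α : ℝ) :
    AEStronglyMeasurable (fun t : ℝ => φ t * t ^ (-α))
      (volume.restrict (Set.Ioi (0 : ℝ))) := by
  have hr : AEMeasurable (fun t : ℝ => t ^ (-α)) (volume.restrict (Set.Ioi (0 : ℝ))) := by
    have hm : Measurable (fun t : ℝ => Real.exp (Real.log t * (-α))) :=
      Real.measurable_exp.comp (Real.measurable_log.mul_const (-α))
    refine hm.aemeasurable.congr ?_
    refine ((ae_restrict_iff' measurableSet_Ioi).2 (ae_of_all _ fun x hx => ?_))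
    exact (Real.rpow_def_of_pos hx _).symm
  exact (hφ.mul hr).aestronglyMeasurable

private lemma aux_integrable (φ : ℝ → ℝ)
    (hφ : AEMeasurable φ (volume.restrict (Set.Ioi (0 : ℝ))))
    {M C : ℝ}
    (h1 : ∀ t ∈ Set.Ioc (0 : ℝ) 1, |φ t| ≤ M)
    (h2 : ∀ t : ℝ, 1 < t → |φ t| ≤ C / t)
    {α : ℝ} (hα : α ∈ Set.Ioo (0 : ℝ) 1) :
    IntegrableOn (fun t : ℝ => φ t * t ^ (-α)) (Set.Ioi 0) := by
  have hmeas := aux_meas φ hφ α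
  have hA : IntegrableOn (fun t : ℝ => φ t * t ^ (-α)) (Set.Ioc 0 1) := by
    have hg : IntegrableOn (fun t : ℝ => M * t ^ (-α)) (Set.Ioc (0:ℝ) 1) :=
      ((intervalIntegrable_iff_integrableOn_Ioc_of_le zero_le_one).1
        (intervalIntegral.intervalIntegrable_rpow' (by linarith [hα.2]))).const_mul M
    refine Integrable.mono' hg
      (hmeas.mono_measure (Measure.restrict_mono Set.Ioc_subset_Ioi_self le_rfl)) ?_
    refine (ae_restrict_iff' measurableSet_Ioc).2 (ae_of_all _ fun t ht => ?_)
    have hpow : (0:ℝ) ≤ t ^ (-α) := Real.rpow_nonneg ht.1.le _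
    rw [norm_mul, Real.norm_eq_abs, Real.norm_eq_abs, abs_of_nonneg hpow]
    exact mul_le_mul_of_nonneg_right (h1 t ht) hpow
  have hB : IntegrableOn (fun t : ℝ => φ t * t ^ (-α)) (Set.Ioi 1) := by
    have hg : IntegrableOn (fun t : ℝ => C * t ^ (-(1+α))) (Set.Ioi (1:ℝ)) :=
      (integrableOn_Ioi_rpow_of_lt (by linarith [hα.1]) one_pos).const_mul C
    refine Integrable.mono' hg
      (hmeas.mono_measure (Measure.restrict_mono (Set.Ioi_subset_Ioi zero_le_one) le_rfl)) ?_
    refine (ae_restrict_iff' measurableSet_Ioi).2 (ae_of_all _ fun t ht => ?_)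
    have ht1 : (1:ℝ) < t := ht
    have htpos : (0:ℝ) < t := lt_trans one_pos ht1
    have hpow : (0:ℝ) ≤ t ^ (-α) := Real.rpow_nonneg htpos.le _
    rw [norm_mul, Real.norm_eq_abs, Real.norm_eq_abs, abs_of_nonneg hpow]
    calc |φ t| * t ^ (-α) ≤ (C / t) * t ^ (-α) :=
          mul_le_mul_of_nonneg_right (h2 t ht1) hpow
      _ = C * t ^ (-(1+α)) := by
          rw [neg_add, Real.rpow_add htpos, Real.rpow_neg_one]; ring
  have h := hA.union hB
  rwa [Set.Ioc_union_Ioi_eq_Ioi zero_le_one] at h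

private lemma aux_int_rpow {α δ : ℝ} (hα : α < 1) (hδ : 0 < δ) :
    ∫ t in Set.Ioc (0:ℝ) δ, t ^ (-α) = δ ^ (1 - α) / (1 - α) := by
  rw [← intervalIntegral.integral_of_le hδ.le,
    integral_rpow (Or.inl (by linarith : (-1:ℝ) < -α)),
    Real.zero_rpow (by linarith : -α + 1 ≠ 0), sub_zero,
    (by ring : -α + 1 = 1 - α)]

private lemma aux_int_rpow_integrable {α δ : ℝ} (hα : α < 1) (hδ : 0 < δ) :
    IntegrableOn (fun t : ℝ => t ^ (-α)) (Set.Ioc 0 δ) :=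
  (intervalIntegrable_iff_integrableOn_Ioc_of_le hδ.le).1
    (intervalIntegral.intervalIntegrable_rpow' (by linarith))

/-- Let `φ : (0,∞) → ℝ` be measurable with `|φ(t)| ≤ M` for `t ∈ (0,1]`, `|φ(t)| ≤ C/t` for
`t > 1` and `lim_{t→0⁺} φ(t) = L`.  Then for every `α ∈ (0,1)` the integral
`∫_0^∞ φ(t) t^{−α} dt` converges absolutely, and
`lim_{α→1⁻} (α/Γ(1−α)) ∫_0^∞ φ(t) t^{−α} dt = L`. -/
theorem tendsto_fractional_average (φ : ℝ → ℝ)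
    (hφ : AEMeasurable φ (volume.restrict (Set.Ioi (0 : ℝ))))
    (M C : ℝ) (hM : 0 ≤ M) (hC : 0 ≤ C) (L : ℝ)
    (h1 : ∀ t ∈ Set.Ioc (0 : ℝ) 1, |φ t| ≤ M)
    (h2 : ∀ t : ℝ, 1 < t → |φ t| ≤ C / t)
    (h3 : Tendsto φ (nhdsWithin 0 (Set.Ioi 0)) (nhds L)) :
    (∀ α ∈ Set.Ioo (0 : ℝ) 1,
      IntegrableOn (fun t : ℝ => φ t * t ^ (-α)) (Set.Ioi 0)) ∧
    Tendsto (fun α : ℝ => (α / Real.Gamma (1 - α)) * ∫ t in Set.Ioi (0 : ℝ), φ t * t ^ (-α))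
      (nhdsWithin 1 (Set.Iio 1)) (nhds L) := by
  refine ⟨fun α hα => aux_integrable φ hφ h1 h2 hα, ?_⟩
  rw [Metric.tendsto_nhds]
  intro ε hε
  -- choose δ
  rw [Metric.tendsto_nhdsWithin_nhds] at h3
  obtain ⟨δ₀, hδ₀, hδ₀'⟩ := h3 (ε/2) (by positivity)
  set δ : ℝ := min (δ₀/2) 1 with hδdef
  have hδpos : 0 < δ := lt_min (by linarith) one_pos
  have hδ1 : δ ≤ 1 := min_le_right _ _
  have hφδ : ∀ t ∈ Set.Ioc (0:ℝ) δ, |φ t - L| ≤ ε/2 := by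
    intro t ht
    have h := hδ₀' (ht.1 : t ∈ Set.Ioi (0:ℝ))
      (by rw [Real.dist_eq, sub_zero, abs_of_pos ht.1]
          exact lt_of_le_of_lt (le_trans ht.2 (min_le_left _ _)) (by linarith))
    rw [Real.dist_eq] at h
    exact h.le
  set B : ℝ := M * δ⁻¹ + 2 * C with hBdef
  have hBnn : 0 ≤ B := by positivity
  set hfun : ℝ → ℝ := fun α =>
    (ε/2) * (α * δ ^ (1-α) / Real.Gamma (2-α)) + B * (α * (1-α) / Real.Gamma (2-α))
      + |L| * |α * δ ^ (1-α) / Real.Gamma (2-α) - 1| with hfundef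
  -- key pointwise bound
  have key : ∀ α ∈ Set.Ioo (1/2 : ℝ) 1,
      |(α / Real.Gamma (1 - α)) * (∫ t in Set.Ioi (0:ℝ), φ t * t ^ (-α)) - L| ≤ hfun α := by
    intro α hα
    have hα01 : α ∈ Set.Ioo (0:ℝ) 1 := ⟨by linarith [hα.1], hα.2⟩
    have h1α : (0:ℝ) < 1 - α := by linarith [hα.2]
    have hΓ2 : 0 < Real.Gamma (2 - α) := Real.Gamma_pos_of_pos (by linarith)
    have hΓ1 : 0 < Real.Gamma (1 - α) := Real.Gamma_pos_of_pos h1α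
    have hΓeq : Real.Gamma (2 - α) = (1 - α) * Real.Gamma (1 - α) := by
      rw [(by ring : (2:ℝ) - α = (1 - α) + 1)]
      exact Real.Gamma_add_one h1α.ne'
    have hc : α / Real.Gamma (1 - α) = α * (1 - α) / Real.Gamma (2 - α) := by
      rw [hΓeq]; field_simp
    have hcnn : 0 ≤ α / Real.Gamma (1 - α) := div_nonneg (by linarith [hα.1]) hΓ1.le
    -- integrability
    have hint : IntegrableOn (fun t : ℝ => φ t * t ^ (-α)) (Set.Ioi 0) :=
      aux_integrable φ hφ h1 h2 hα01
    have hint1 : IntegrableOn (fun t : ℝ => φ t * t ^ (-α)) (Set.Ioc 0 δ) :=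
      hint.mono_set Set.Ioc_subset_Ioi_self
    have hint2 : IntegrableOn (fun t : ℝ => φ t * t ^ (-α)) (Set.Ioi δ) :=
      hint.mono_set (Set.Ioi_subset_Ioi hδpos.le)
    have hK : IntegrableOn (fun t : ℝ => t ^ (-α)) (Set.Ioc 0 δ) :=
      aux_int_rpow_integrable hα.2 hδpos
    -- split at δ
    have hsplit : (∫ t in Set.Ioi (0:ℝ), φ t * t ^ (-α))
        = (∫ t in Set.Ioc (0:ℝ) δ, φ t * t ^ (-α)) + ∫ t in Set.Ioi δ, φ t * t ^ (-α) := by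
      rw [← setIntegral_union (Set.Ioc_disjoint_Ioi le_rfl) measurableSet_Ioi hint1 hint2,
        Set.Ioc_union_Ioi_eq_Ioi hδpos.le]
    -- decompose the inner integral
    have hdec : (∫ t in Set.Ioc (0:ℝ) δ, φ t * t ^ (-α))
        = (∫ t in Set.Ioc (0:ℝ) δ, (φ t - L) * t ^ (-α))
          + L * (δ ^ (1-α) / (1-α)) := by
      have heq : (∫ t in Set.Ioc (0:ℝ) δ, (φ t - L) * t ^ (-α))
          = (∫ t in Set.Ioc (0:ℝ) δ, φ t * t ^ (-α))
            - L * ∫ t in Set.Ioc (0:ℝ) δ, t ^ (-α) := by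
        rw [show (fun t : ℝ => (φ t - L) * t ^ (-α))
            = fun t : ℝ => φ t * t ^ (-α) - L * t ^ (-α) from funext fun t => by ring]
        rw [integral_sub hint1 (hK.const_mul L), integral_const_mul]
      rw [heq, aux_int_rpow hα.2 hδpos]; ring
    -- bound on A
    set A : ℝ := ∫ t in Set.Ioc (0:ℝ) δ, (φ t - L) * t ^ (-α) with hAdef
    have hAbound : |A| ≤ (ε/2) * (δ ^ (1-α) / (1-α)) := by
      have hb : ‖A‖ ≤ ∫ t in Set.Ioc (0:ℝ) δ, (ε/2) * t ^ (-α) := by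
        refine norm_integral_le_of_norm_le (hK.const_mul (ε/2)) ?_
        refine (ae_restrict_iff' measurableSet_Ioc).2 (ae_of_all _ fun t ht => ?_)
        have hpow : (0:ℝ) ≤ t ^ (-α) := Real.rpow_nonneg ht.1.le _
        rw [norm_mul, Real.norm_eq_abs, Real.norm_eq_abs, abs_of_nonneg hpow]
        exact mul_le_mul_of_nonneg_right (hφδ t ht) hpow
      rwa [integral_const_mul, aux_int_rpow hα.2 hδpos, Real.norm_eq_abs] at hb
    -- bound on Bint
    set Bint : ℝ := ∫ t in Set.Ioi δ, φ t * t ^ (-α) with hBintdef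
    have hBbound : |Bint| ≤ B := by
      have hint21 : IntegrableOn (fun t : ℝ => φ t * t ^ (-α)) (Set.Ioc δ 1) :=
        hint.mono_set (fun x hx => lt_trans hδpos hx.1)
      have hint22 : IntegrableOn (fun t : ℝ => φ t * t ^ (-α)) (Set.Ioi 1) :=
        hint.mono_set (Set.Ioi_subset_Ioi zero_le_one)
      have hBsplit : Bint = (∫ t in Set.Ioc δ 1, φ t * t ^ (-α))
          + ∫ t in Set.Ioi (1:ℝ), φ t * t ^ (-α) := by
        rw [hBintdef, ← setIntegral_union (Set.Ioc_disjoint_Ioi le_rfl) measurableSet_Ioi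
          hint21 hint22, Set.Ioc_union_Ioi_eq_Ioi hδ1]
      have hB1 : |∫ t in Set.Ioc δ 1, φ t * t ^ (-α)| ≤ M * δ⁻¹ := by
        have hb := norm_setIntegral_le_of_norm_le_const (μ := volume)
          (s := Set.Ioc δ 1) (f := fun t : ℝ => φ t * t ^ (-α)) (C := M * δ⁻¹)
          (by rw [Real.volume_Ioc]; exact ENNReal.ofReal_lt_top)
          (fun x hx => by
            have hxpos : 0 < x := lt_trans hδpos hx.1
            have hpow : (0:ℝ) ≤ x ^ (-α) := Real.rpow_nonneg hxpos.le _
            rw [norm_mul, Real.norm_eq_abs, Real.norm_eq_abs, abs_of_nonneg hpow]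
            calc |φ x| * x ^ (-α) ≤ M * x ^ (-α) :=
                  mul_le_mul_of_nonneg_right (h1 x ⟨hxpos, hx.2⟩) hpow
              _ ≤ M * δ ^ (-α) := by
                  refine mul_le_mul_of_nonneg_left ?_ hM
                  exact Real.rpow_le_rpow_of_nonpos hδpos hx.1.le (by linarith [hα01.1])
              _ ≤ M * δ⁻¹ := by
                  refine mul_le_mul_of_nonneg_left ?_ hM
                  rw [← Real.rpow_neg_one δ]
                  exact Real.rpow_le_rpow_of_exponent_ge hδpos hδ1 (by linarith [hα.2]))
        rw [Real.norm_eq_abs] at hb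
        refine le_trans hb ?_
        rw [Real.volume_real_Ioc_of_le hδ1]
        nlinarith [mul_nonneg hM (inv_nonneg.2 hδpos.le)]
      have hB2 : |∫ t in Set.Ioi (1:ℝ), φ t * t ^ (-α)| ≤ 2 * C := by
        have hg : IntegrableOn (fun t : ℝ => C * t ^ (-(3/2) : ℝ)) (Set.Ioi (1:ℝ)) :=
          (integrableOn_Ioi_rpow_of_lt (by norm_num) one_pos).const_mul C
        have hb : ‖∫ t in Set.Ioi (1:ℝ), φ t * t ^ (-α)‖
            ≤ ∫ t in Set.Ioi (1:ℝ), C * t ^ (-(3/2) : ℝ) := by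
          refine norm_integral_le_of_norm_le hg ?_
          refine (ae_restrict_iff' measurableSet_Ioi).2 (ae_of_all _ fun t ht => ?_)
          have ht1 : (1:ℝ) < t := ht
          have htpos : (0:ℝ) < t := lt_trans one_pos ht1
          have hpow : (0:ℝ) ≤ t ^ (-α) := Real.rpow_nonneg htpos.le _
          rw [norm_mul, Real.norm_eq_abs, Real.norm_eq_abs, abs_of_nonneg hpow]
          calc |φ t| * t ^ (-α) ≤ (C / t) * t ^ (-α) :=
                mul_le_mul_of_nonneg_right (h2 t ht1) hpow
            _ = C * t ^ (-(1+α)) := by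
                rw [neg_add, Real.rpow_add htpos, Real.rpow_neg_one]; ring
            _ ≤ C * t ^ (-(3/2) : ℝ) := by
                refine mul_le_mul_of_nonneg_left ?_ hC
                exact Real.rpow_le_rpow_of_exponent_le ht1.le (by linarith [hα.1])
        rw [Real.norm_eq_abs] at hb
        refine le_trans hb ?_
        rw [integral_const_mul, integral_Ioi_rpow_of_lt (by norm_num) one_pos,
          Real.one_rpow]
        norm_num
        linarith
      calc |Bint| ≤ |∫ t in Set.Ioc δ 1, φ t * t ^ (-α)|
            + |∫ t in Set.Ioi (1:ℝ), φ t * t ^ (-α)| := by rw [hBsplit]; exact abs_add_le _ _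
        _ ≤ M * δ⁻¹ + 2 * C := add_le_add hB1 hB2
    -- c * K = g
    have hg : (α / Real.Gamma (1 - α)) * (δ ^ (1-α) / (1-α))
        = α * δ ^ (1-α) / Real.Gamma (2-α) := by
      rw [hc]; field_simp
    -- decomposition of f α - L
    have hfL : (α / Real.Gamma (1 - α)) * (∫ t in Set.Ioi (0:ℝ), φ t * t ^ (-α)) - L
        = (α / Real.Gamma (1 - α)) * A + (α / Real.Gamma (1 - α)) * Bint
          + L * (α * δ ^ (1-α) / Real.Gamma (2-α) - 1) := by
      rw [hsplit, hdec, ← hg]; ring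
    rw [hfL]
    calc |(α / Real.Gamma (1 - α)) * A + (α / Real.Gamma (1 - α)) * Bint
          + L * (α * δ ^ (1-α) / Real.Gamma (2-α) - 1)|
        ≤ |(α / Real.Gamma (1 - α)) * A| + |(α / Real.Gamma (1 - α)) * Bint|
          + |L * (α * δ ^ (1-α) / Real.Gamma (2-α) - 1)| := abs_add_three _ _ _
      _ ≤ (ε/2) * (α * δ ^ (1-α) / Real.Gamma (2-α)) + B * (α * (1-α) / Real.Gamma (2-α))
          + |L| * |α * δ ^ (1-α) / Real.Gamma (2-α) - 1| := by
          refine add_le_add (add_le_add ?_ ?_) ?_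
          · rw [abs_mul, abs_of_nonneg hcnn, ← hg]
            calc (α / Real.Gamma (1 - α)) * |A|
                ≤ (α / Real.Gamma (1 - α)) * ((ε/2) * (δ ^ (1-α) / (1-α))) :=
                  mul_le_mul_of_nonneg_left hAbound hcnn
              _ = (ε/2) * ((α / Real.Gamma (1 - α)) * (δ ^ (1-α) / (1-α))) := by ring
          · rw [abs_mul, abs_of_nonneg hcnn, hc]
            calc (α * (1-α) / Real.Gamma (2-α)) * |Bint|
                ≤ (α * (1-α) / Real.Gamma (2-α)) * B :=
                  mul_le_mul_of_nonneg_left hBbound (div_nonneg (mul_nonneg (by linarith [hα.1]) h1α.le) hΓ2.le)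
              _ = B * (α * (1-α) / Real.Gamma (2-α)) := by ring
          · rw [abs_mul]
      _ = hfun α := rfl
  -- continuity of hfun at 1 and limit ε/2
  have hδne : δ ^ (1 - (1:ℝ)) = 1 := by rw [sub_self, Real.rpow_zero]
  have hΓcont : ContinuousAt (fun α : ℝ => Real.Gamma (2 - α)) 1 := by
    have hd : ContinuousAt Real.Gamma (2 - (1:ℝ)) :=
      (Real.differentiableAt_Gamma (fun m => by
        have h0 : (0:ℝ) ≤ (m:ℝ) := Nat.cast_nonneg m
        intro h; linarith [h0, h.ge, h.le])).continuousAt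
    exact ContinuousAt.comp (g := Real.Gamma) (f := fun α : ℝ => 2 - α) hd
      ((continuous_const.sub continuous_id).continuousAt)
  have hδcont : ContinuousAt (fun α : ℝ => δ ^ (1 - α)) 1 := by
    have heq : (fun α : ℝ => δ ^ (1 - α))
        = fun α : ℝ => Real.exp (Real.log δ * (1 - α)) :=
      funext fun α => Real.rpow_def_of_pos hδpos _
    rw [heq]
    exact (Real.continuous_exp.comp
      (continuous_const.mul (continuous_const.sub continuous_id))).continuousAt
  have hΓne : Real.Gamma (2 - (1:ℝ)) ≠ 0 := by
    norm_num [Real.Gamma_one]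
  have hcont : ContinuousAt hfun 1 := by
    refine ContinuousAt.add (ContinuousAt.add ?_ ?_) ?_
    · exact continuousAt_const.mul ((continuousAt_id.mul hδcont).div hΓcont hΓne)
    · exact continuousAt_const.mul ((continuousAt_id.mul
        (continuous_const.sub continuous_id).continuousAt).div hΓcont hΓne)
    · exact continuousAt_const.mul
        (((continuousAt_id.mul hδcont).div hΓcont hΓne).sub continuousAt_const).abs
  have hval : hfun 1 = ε/2 := by
    simp only [hfundef]
    norm_num [Real.Gamma_one, hδne]
  have htend : Tendsto hfun (nhdsWithin 1 (Set.Iio 1)) (nhds (ε/2)) := by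
    rw [← hval]
    exact tendsto_nhdsWithin_of_tendsto_nhds hcont.tendsto
  have hev : ∀ᶠ α in nhdsWithin 1 (Set.Iio 1), hfun α < ε :=
    htend.eventually_lt_const (by linarith)
  have hmem : Set.Ioo (1/2 : ℝ) 1 ∈ nhdsWithin 1 (Set.Iio 1) :=
    Ioo_mem_nhdsLT_of_mem ⟨by norm_num, le_rfl⟩
  filter_upwards [hev, hmem] with α hα₁ hα₂
  rw [Real.dist_eq]
  exact lt_of_le_of_lt (key α hα₂) hα₁
end
end
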